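/- arXiv:2101.01354 — 3 statements merged into one kernel-verified Lean document; each statement's English description precedes it below -/
import Mathlib

section
/- Let G be a finite simple graph on a finite nonempty vertex set that is not a complete graph, with maximum degree Δ(G) ≥ 9 and chromatic number χ(G) > max{Δ(G) − 1, ω(G)}, and suppose G is minimal with this property, i.e., every simple graph H with strictly fewer vertices and Δ(H) ≥ 9 that is not complete satisfies χ(H) ≤ max{Δ(H) − 1, ω(H)}. Then for every vertex u of G, the graph G − u obtained by deleting u satisfies χ(G − u) = χ(G) − 1. -/
/-!
Let `k = max (Δ(G) - 1) ω(G)`. Since `χ(G) ≤ χ(G - u) + 1` and `k < χ(G)`, it suffices to colour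
`G - u` with `k` colours. If `Δ(G - u) ≥ 9` this is minimality (`G - u` is not complete, for then
`χ(G) ≤ |G| - 1 ≤ ω(G)`). Otherwise a greedy colouring uses `9 ≤ k` colours, unless `k = 8`, that
is `Δ(G) = 9` and `ω(G) ≤ 8`. In that case add edges to `G - u` for as long as it stays `K₉`-free
with maximum degree at most 9. If the result has a vertex of degree 9, minimality colours it with
8 colours. If not, adding any missing edge `xy` creates a `K₉`, so `x` and `y` have a common `K₇`;
following these cliques through a second non-edge produces a vertex of degree 9, unless the graph
has at most 9 vertices, where being `K₉`-free already gives an 8-colouring.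
-/

open Finset

namespace SimpleGraph

variable {V : Type*} {G : SimpleGraph V}

theorem cliqueFree_iff_cliqueNum_lt [Finite V] {n : ℕ} : G.CliqueFree n ↔ G.cliqueNum < n := by
  refine ⟨fun h ↦ ?_, fun h t ht ↦ ?_⟩
  · by_contra! hn
    obtain ⟨t, ht⟩ := G.exists_isNClique_cliqueNum
    exact ht.not_cliqueFree (h.mono hn)
  · have := ht.isClique.card_le_cliqueNum
    rw [ht.card_eq] at this
    omega

theorem ne_top_of_cliqueFree [Fintype V] {n : ℕ} (h : G.CliqueFree n) (hn : n ≤ Fintype.card V) :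
    G ≠ ⊤ := by
  rintro rfl
  exact (IsContained.refl _).not_cliqueFree_card (h.mono hn)

theorem colorable_of_cliqueFree_of_card_le [Fintype V] {n : ℕ} (hcf : G.CliqueFree (n + 1))
    (hcard : Fintype.card V ≤ n + 1) : G.Colorable n := by
  rcases hcard.lt_or_eq with hlt | heq
  · exact G.colorable_of_fintype.mono (by omega)
  · have hχ : G.chromaticNumber < Fintype.card V := G.chromaticNumber_le_card.lt_of_ne
      (mt eq_top_of_chromaticNumber_eq_card (ne_top_of_cliqueFree hcf heq.ge))
    rw [heq, Nat.cast_add, Nat.cast_one, ENat.lt_add_one_iff (ENat.natCast_ne_top n)] at hχ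
    exact chromaticNumber_le_iff_colorable.mp hχ

theorem degree_sup_edge_le [Fintype V] (x y v : V) [Fintype (G.neighborSet v)]
    [Fintype ((G ⊔ edge x y).neighborSet v)] : (G ⊔ edge x y).degree v ≤ G.degree v + 1 := by
  classical
  rw [← card_neighborFinset_eq_degree, ← card_neighborFinset_eq_degree, neighborFinset_sup]
  refine (card_union_le _ _).trans (Nat.add_le_add_left (card_le_one.mpr ?_) _)
  simp only [mem_neighborFinset, edge_adj]
  grind

theorem Colorable.of_induce_compl_singleton {u : V} {n : ℕ} (h : (G.induce {u}ᶜ).Colorable n) :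
    G.Colorable (n + 1) := by
  classical
  obtain ⟨C⟩ := h
  refine ⟨Coloring.mk (fun v ↦ if hv : v = u then Fin.last n else (C ⟨v, hv⟩).castSucc) ?_⟩
  intro v w hvw
  split_ifs with hv hw hw
  · exact absurd (hv.trans hw.symm) hvw.ne
  · exact (Fin.castSucc_lt_last _).ne'
  · exact (Fin.castSucc_lt_last _).ne
  · exact (Fin.castSucc_injective _).ne (C.valid hvw)

theorem chromaticNumber_le_induce_compl_singleton_add_one [Finite V] (u : V) :
    G.chromaticNumber ≤ (G.induce {u}ᶜ).chromaticNumber + 1 := by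
  have hfin := (G.induce {u}ᶜ).colorable_chromaticNumber_of_fintype
  have hne : (G.induce {u}ᶜ).chromaticNumber ≠ ⊤ :=
    (hfin.chromaticNumber_le.trans_lt (ENat.natCast_lt_top _)).ne
  rw [← ENat.natCast_toNat hne]
  exact_mod_cast hfin.of_induce_compl_singleton.chromaticNumber_le

theorem chromaticNumber_induce_compl_singleton_eq_sub_one [Finite V] {u : V} {k : ℕ}
    (hk : (G.induce {u}ᶜ).Colorable k) (hχ : k < G.chromaticNumber) :
    (G.induce {u}ᶜ).chromaticNumber = G.chromaticNumber - 1 := by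
  have hle : (G.induce {u}ᶜ).chromaticNumber + 1 ≤ G.chromaticNumber :=
    (add_le_add hk.chromaticNumber_le le_rfl).trans (Order.add_one_le_of_lt hχ)
  rw [le_antisymm (chromaticNumber_le_induce_compl_singleton_add_one u) hle,
    (ENat.addLECancellable_of_ne_top ENat.one_ne_top).add_tsub_cancel_right]

theorem Colorable.of_forall_degree_le [Fintype V] [DecidableRel G.Adj] {d : ℕ}
    (h : ∀ v, G.degree v ≤ d) : G.Colorable (d + 1) := by
  classical
  suffices ∀ s : Finset V, ∃ f : V → Fin (d + 1), ∀ v ∈ s, ∀ w ∈ s, G.Adj v w → f v ≠ f w by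
    obtain ⟨f, hf⟩ := this univ
    exact ⟨Coloring.mk f fun hvw ↦ hf _ (mem_univ _) _ (mem_univ _) hvw⟩
  intro s
  induction s using Finset.induction_on with
  | empty => exact ⟨fun _ ↦ 0, by simp⟩
  | @insert a s ha ih =>
    obtain ⟨f, hf⟩ := ih
    obtain ⟨c, -, hc⟩ := exists_mem_notMem_of_card_lt_card (s := (G.neighborFinset a).image f)
      (t := univ) (by simpa using card_image_le.trans_lt (Nat.lt_succ_of_le (h a)))
    have hca : ∀ w, G.Adj a w → c ≠ f w := fun w haw hcw ↦
      hc (mem_image.mpr ⟨w, (G.mem_neighborFinset a w).mpr haw, hcw.symm⟩)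
    refine ⟨Function.update f a c, fun v hv w hw hvw ↦ ?_⟩
    simp only [Function.update_apply]
    split_ifs with hva hwa hwa
    · exact absurd (hva.trans hwa.symm) hvw.ne
    · exact hca w (hva ▸ hvw)
    · exact (hca v (hwa ▸ hvw.symm)).symm
    · exact hf v ((mem_insert.mp hv).resolve_left hva) w ((mem_insert.mp hw).resolve_left hwa) hvw

theorem exists_isNClique_subset_commonNeighbors_of_not_cliqueFree_sup_edge {n : ℕ} {x y : V}
    (hcf : G.CliqueFree (n + 2)) (hxy : x ≠ y) (h : ¬(G ⊔ edge x y).CliqueFree (n + 2)) :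
    ∃ T : Finset V, G.IsNClique n T ∧ ↑T ⊆ G.commonNeighbors x y := by
  classical
  obtain ⟨t, ht⟩ := not_forall_not.mp h
  have ht' : (G ⊔ edge y x).IsNClique (n + 2) t := edge_comm x y ▸ ht
  have hx : x ∈ t := hcf.mem_of_sup_edge_isNClique ht
  have hy : y ∈ t := hcf.mem_of_sup_edge_isNClique ht'
  have htx := ht.erase_of_sup_edge_of_mem hx
  have hty := ht'.erase_of_sup_edge_of_mem hy
  refine ⟨(t.erase x).erase y, htx.erase_of_mem (mem_erase.mpr ⟨hxy.symm, hy⟩), fun w hw ↦ ?_⟩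
  simp only [coe_erase, Set.mem_sdiff, Set.mem_singleton_iff, mem_coe] at hw
  obtain ⟨⟨hwt, hwx⟩, hwy⟩ := hw
  exact ⟨hty.isClique (mem_erase.mpr ⟨hxy, hx⟩) (mem_erase.mpr ⟨hwy, hwt⟩) (Ne.symm hwx),
    htx.isClique (mem_erase.mpr ⟨hxy.symm, hy⟩) (mem_erase.mpr ⟨hwx, hwt⟩) (Ne.symm hwy)⟩

theorem IsNClique.mem_of_adj_of_subset_commonNeighbors [Fintype V] [DecidableRel G.Adj]
    [DecidableEq V] {d : ℕ} {x y s w : V} {T : Finset V} (hT : G.IsNClique d T)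
    (hTxy : ↑T ⊆ G.commonNeighbors x y) (hxy : x ≠ y) (hs : s ∈ T) (hdeg : G.degree s ≤ d + 1)
    (hsw : G.Adj s w) : w ∈ insert x (insert y T) := by
  by_contra hw
  simp only [mem_insert, not_or] at hw
  obtain ⟨hwx, hwy, hwT⟩ := hw
  have hxT : x ∉ T := fun hx ↦ (hTxy hx).1.ne rfl
  have hyT : y ∉ T := fun hy ↦ (hTxy hy).2.ne rfl
  have hsub : insert w (insert x (insert y (T.erase s))) ⊆ G.neighborFinset s := by
    intro a ha
    rw [mem_neighborFinset]
    simp only [mem_insert, mem_erase] at ha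
    rcases ha with rfl | rfl | rfl | ⟨has, haT⟩
    · exact hsw
    · exact (hTxy hs).1.symm
    · exact (hTxy hs).2.symm
    · exact hT.isClique hs haT (Ne.symm has)
  have hcard := card_le_card hsub
  rw [card_insert_of_notMem (by simp [hwx, hwy, hwT]), card_insert_of_notMem (by simp [hxy, hxT]),
    card_insert_of_notMem (by simp [hyT]), card_erase_of_mem hs, hT.card_eq,
    card_neighborFinset_eq_degree] at hcard
  have := hT.card_eq ▸ card_pos.mpr ⟨s, hs⟩
  omega

theorem card_le_of_forall_not_adj_exists_isNClique_subset_commonNeighbors [Fintype V]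
    [DecidableRel G.Adj] {d : ℕ} (hd : 3 ≤ d) (hdeg : ∀ v, G.degree v ≤ d + 1)
    (hpair : ∀ x y, x ≠ y → ¬G.Adj x y →
      ∃ T : Finset V, G.IsNClique d T ∧ ↑T ⊆ G.commonNeighbors x y) :
    Fintype.card V ≤ d + 2 := by
  classical
  by_contra! hcard
  have hout : ∀ s : Finset V, #s ≤ d + 2 → ∃ z, z ∉ s := fun s hs ↦ by
    obtain ⟨z, -, hz⟩ := exists_mem_notMem_of_card_lt_card (s := s) (t := univ)
      (by rw [card_univ]; omega)
    exact ⟨z, hz⟩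
  obtain ⟨x⟩ : Nonempty V := Fintype.card_pos_iff.mp (by omega)
  obtain ⟨y, hy⟩ := hout (insert x (G.neighborFinset x))
    ((card_insert_le _ _).trans (by rw [card_neighborFinset_eq_degree]; linarith [hdeg x]))
  simp only [mem_insert, mem_neighborFinset, not_or] at hy
  obtain ⟨T, hT, hTxy⟩ := hpair x y (Ne.symm hy.1) hy.2
  have hT_nbhd : ∀ s ∈ T, ∀ w, G.Adj s w → w ∈ insert x (insert y T) := fun s hs w hsw ↦
    hT.mem_of_adj_of_subset_commonNeighbors hTxy (Ne.symm hy.1) hs (hdeg s) hsw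
  obtain ⟨z, hz⟩ := hout (insert x (insert y T))
    ((card_insert_le _ _).trans (by linarith [card_insert_le y T, hT.card_eq]))
  obtain ⟨t, ht⟩ : T.Nonempty := card_pos.mp (by rw [hT.card_eq]; omega)
  obtain ⟨T', hT', hT'tz⟩ := hpair t z (fun htz ↦ hz (htz ▸ by simp [ht]))
    (fun htz ↦ hz (hT_nbhd t ht z htz))
  obtain ⟨s, hsT', hsT⟩ : ∃ s ∈ T', s ∈ T := by
    by_contra! hT'T
    have hsub : T' ⊆ {x, y} := fun a ha ↦ by
      have := hT_nbhd t ht a (hT'tz ha).1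
      simp only [mem_insert, mem_singleton] at this ⊢
      tauto
    have := (card_le_card hsub).trans card_le_two
    rw [hT'.card_eq] at this
    omega
  exact hz (hT_nbhd s hsT z (G.adj_symm (hT'tz hsT').2))

theorem colorable_of_cliqueFree_of_forall_degree_le [Fintype V] [DecidableRel G.Adj] {d : ℕ}
    (hd : 3 ≤ d)
    (hmin : ∀ (H : SimpleGraph V) [DecidableRel H.Adj], H ≠ ⊤ → d + 2 ≤ H.maxDegree →
      H.chromaticNumber ≤ (↑(max (H.maxDegree - 1) H.cliqueNum) : ℕ∞))
    (hcf : G.CliqueFree (d + 2)) (hdeg : ∀ v, G.degree v ≤ d + 1) : G.Colorable (d + 1) := by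
  classical
  by_cases hcard : Fintype.card V ≤ d + 2
  · exact colorable_of_cliqueFree_of_card_le hcf hcard
  let S : Set (SimpleGraph V) := {H | G ≤ H ∧ H.CliqueFree (d + 2) ∧ ∀ v, H.degree v ≤ d + 2}
  have hGS : G ∈ S := ⟨le_rfl, hcf, fun v ↦ Nat.le_succ_of_le (by convert hdeg v)⟩
  obtain ⟨M, ⟨hGM, hMcf, hMdeg⟩, hMmax⟩ := S.toFinite.exists_maximal ⟨G, hGS⟩
  refine Colorable.mono_left hGM ?_
  by_cases hM : ∃ v, M.degree v = d + 2
  · obtain ⟨v, hv⟩ := hM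
    have hΔ : M.maxDegree = d + 2 :=
      le_antisymm (M.maxDegree_le_of_forall_degree_le _ hMdeg) (hv ▸ M.degree_le_maxDegree v)
    have hω := cliqueFree_iff_cliqueNum_lt.mp hMcf
    refine chromaticNumber_le_iff_colorable.mp
      ((hmin M (ne_top_of_cliqueFree hMcf (by omega)) hΔ.ge).trans ?_)
    exact_mod_cast max_le (by omega) (by omega)
  -- A maximal `M` of maximum degree at most `d + 1` is saturated: by maximality every missing
  -- edge creates a `K_{d+2}`, which the counting lemma rules out on more than `d + 2` vertices.
  simp only [not_exists] at hM
  have hMdeg' : ∀ v, M.degree v ≤ d + 1 := fun v ↦ Nat.le_of_lt_succ ((hMdeg v).lt_of_ne (hM v))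
  refine absurd (card_le_of_forall_not_adj_exists_isNClique_subset_commonNeighbors hd hMdeg'
    fun x y hxy hnadj ↦ ?_) hcard
  refine exists_isNClique_subset_commonNeighbors_of_not_cliqueFree_sup_edge hMcf hxy fun hcf' ↦ ?_
  have hlt := M.lt_sup_edge x y hxy hnadj
  exact hlt.not_ge <| hMmax ⟨hGM.trans hlt.le, hcf', fun v ↦ by
    have := degree_sup_edge_le (G := M) x y v
    have := hMdeg' v
    convert (show (M ⊔ edge x y).degree v ≤ d + 2 by omega) using 2⟩ hlt.le

theorem induce_compl_singleton_ne_top [Fintype V] [DecidableRel G.Adj] (hG : G ≠ ⊤)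
    (hω : G.cliqueNum < G.chromaticNumber) (u : V) : G.induce {u}ᶜ ≠ ⊤ := by
  classical
  intro htop
  have hclique : G.IsClique (univ.erase u : Finset V) :=
    (induce_eq_top.mp htop).subset (by simp)
  have hcard : Fintype.card V - 1 ≤ G.cliqueNum := by
    simpa [card_erase_of_mem] using hclique.card_le_cliqueNum
  have hχ : G.chromaticNumber < Fintype.card V :=
    G.chromaticNumber_le_card.lt_of_ne (mt eq_top_of_chromaticNumber_eq_card hG)
  have := (Order.add_one_le_of_lt hω).trans_lt hχ
  norm_cast at this
  omega

end SimpleGraph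

open SimpleGraph

theorem borodin_kostochka_lemma_part2_general
    {V : Type} [Fintype V]
    (G : SimpleGraph V) [DecidableRel G.Adj]
    (hnc : G ≠ ⊤)
    (hΔ : 9 ≤ G.maxDegree)
    (hχ : (↑(max (G.maxDegree - 1) G.cliqueNum) : ℕ∞) < G.chromaticNumber)
    (hmin : ∀ (W : Type) [Fintype W] (H : SimpleGraph W) [DecidableRel H.Adj],
      Fintype.card W < Fintype.card V → H ≠ ⊤ → 9 ≤ H.maxDegree →
      H.chromaticNumber ≤ (↑(max (H.maxDegree - 1) H.cliqueNum) : ℕ∞)) :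
    ∀ u : V, (G.induce {u}ᶜ).chromaticNumber = G.chromaticNumber - 1 := by
  classical
  intro u
  refine chromaticNumber_induce_compl_singleton_eq_sub_one ?_ hχ
  have hW : Fintype.card ({u}ᶜ : Set V) < Fintype.card V :=
    Fintype.card_subtype_lt (x := u) (by simp)
  have hω : G.cliqueNum < G.chromaticNumber :=
    (Nat.cast_le.mpr (le_max_right _ _)).trans_lt hχ
  have hΔu : (G.induce {u}ᶜ).maxDegree ≤ G.maxDegree :=
    (Embedding.induce ({u}ᶜ : Set V)).toCopy.maxDegree_mono
  have hωu : (G.induce {u}ᶜ).cliqueNum ≤ G.cliqueNum := G.cliqueNum_induce_le _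
  by_cases hΔ' : 9 ≤ (G.induce {u}ᶜ).maxDegree
  · refine chromaticNumber_le_iff_colorable.mp
      ((hmin _ _ hW (induce_compl_singleton_ne_top hnc hω u) hΔ').trans ?_)
    exact_mod_cast max_le_max (by omega) hωu
  have hdeg : ∀ v, (G.induce {u}ᶜ).degree v ≤ 8 := fun v ↦ by
    have := (G.induce {u}ᶜ).degree_le_maxDegree v
    omega
  by_cases hk : 9 ≤ max (G.maxDegree - 1) G.cliqueNum
  · exact (Colorable.of_forall_degree_le hdeg).mono hk
  -- Here `Δ(G) = 9` and `ω(G) ≤ 8`, so `G - u` is a `K₉`-free graph of maximum degree at most 8.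
  rw [show max (G.maxDegree - 1) G.cliqueNum = 7 + 1 by omega]
  exact colorable_of_cliqueFree_of_forall_degree_le (by norm_num) (fun H _ ↦ hmin _ H hW)
    (cliqueFree_iff_cliqueNum_lt.mpr (by omega)) hdeg

theorem borodin_kostochka_lemma_part2
    {V : Type} [Fintype V] [Nonempty V]
    (G : SimpleGraph V) [DecidableRel G.Adj]
    (hnc : G ≠ ⊤)
    (hΔ : 9 ≤ G.maxDegree)
    (hχ : (↑(max (G.maxDegree - 1) G.cliqueNum) : ℕ∞) < G.chromaticNumber)
    (hmin : ∀ (W : Type) [Fintype W] (H : SimpleGraph W) [DecidableRel H.Adj],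
      Fintype.card W < Fintype.card V → H ≠ ⊤ → 9 ≤ H.maxDegree →
      H.chromaticNumber ≤ (↑(max (H.maxDegree - 1) H.cliqueNum) : ℕ∞)) :
    ∀ u : V, (G.induce {u}ᶜ).chromaticNumber = G.chromaticNumber - 1 :=
  borodin_kostochka_lemma_part2_general G hnc hΔ hχ hmin
end

section
/- Let G be a finite simple graph with maximum degree Δ(G) ≥ 9 that is (P3 ∪ K1)-free, i.e., G contains no induced subgraph isomorphic to the disjoint union of a path on 3 vertices and a single isolated vertex. Then χ(G) ≤ max{Δ(G) − 1, ω(G)}. -/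
/-!
If `G` has three pairwise non-adjacent vertices `T`, then, `G` being `P3 ∪ K1`-free, a vertex
adjacent to two vertices of `T` is adjacent to all three. If no vertex is adjacent to all of `T`,
adjacency is transitive, `G` is a disjoint union of cliques and `χ = ω`. Otherwise the common
neighbours of `T` are adjacent to every other vertex, and each of these other vertices `C` misses
two vertices of `C` besides itself; so `C` takes `|C| - 2` colors and the rest a disjoint palette
of `Δ + 1 - |C|` colors.

If `G` has no three independent vertices, its complement `H` is triangle-free, and a vertex set
`S` into which the other vertices are matched along edges of `H` yields a coloring of `G` with
`|S|` colors. Let `δ` be the minimum degree of `H`, so that `n - 1 - δ ≤ Δ(G)`. If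
`n ≤ 2δ + 3`, then `δ ≥ 7`, `H` has no closed walk of length five (double counting), hence is
bipartite, and by Hall's theorem the smaller side matches into the larger one, a clique of `G`.
If `n ≥ 2δ + 4`, a maximum matching `M` of `H` with at least `δ + 2` edges gives
`n - δ - 2 ≤ Δ(G) - 1` colors; otherwise there are two exposed vertices, each adjacent to all
but at most one edge of `M`, and the absence of augmenting paths of length at most seven shows
that the exposed vertices together with one suitable end of each edge of `M` form a clique of `G`.
-/

open SimpleGraph

/-- `P3 ∪ K1`: the path `0 – 1 – 2` on three vertices together with the
isolated vertex `3`. -/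
def P3UnionK1 : SimpleGraph (Fin 4) :=
  SimpleGraph.fromRel (fun a b => (a = 0 ∧ b = 1) ∨ (a = 1 ∧ b = 2))

open Finset

namespace SimpleGraph

variable {V : Type*} {G H : SimpleGraph V}

theorem nonempty_P3UnionK1_embedding {a b c d : V} (hab : G.Adj a b) (hbc : G.Adj b c)
    (hac : ¬G.Adj a c) (hac' : a ≠ c) (hda : d ≠ a) (hdc : d ≠ c)
    (hnda : ¬G.Adj d a) (hndb : ¬G.Adj d b) (hndc : ¬G.Adj d c) :
    Nonempty (P3UnionK1 ↪g G) := by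
  have hdb : d ≠ b := by rintro rfl; exact hnda hab.symm
  have hinj : Function.Injective ![a, b, c, d] := by
    intro i j h
    fin_cases i <;> fin_cases j <;> simp_all [hab.ne, hbc.ne, hab.ne', hbc.ne', eq_comm]
  refine ⟨⟨⟨_, hinj⟩, fun {i j} => ?_⟩⟩
  fin_cases i <;> fin_cases j <;>
    simp_all [P3UnionK1, G.adj_comm d, G.adj_comm c a, hab.symm, hbc.symm]

/-! ### Greedy colorings -/

theorem colorable_of_forall_lt {k : ℕ} (c : V → ℕ) (hlt : ∀ v, c v < k)
    (hc : ∀ ⦃u v⦄, G.Adj u v → c u ≠ c v) : G.Colorable k :=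
  ⟨Coloring.mk (fun v => ⟨c v, hlt v⟩) fun huv h => hc huv (Fin.val_eq_of_eq h)⟩

theorem exists_coloring_on_of_card_adj_lt [DecidableEq V] [DecidableRel G.Adj] (T : Finset V)
    (k : ℕ) (h : ∀ v ∈ T, #{w ∈ T | G.Adj v w} < k) :
    ∃ c : V → ℕ, (∀ v ∈ T, c v < k) ∧ ∀ u ∈ T, ∀ v ∈ T, G.Adj u v → c u ≠ c v := by
  induction T using Finset.induction_on with
  | empty => exact ⟨fun _ => 0, by simp, by simp⟩
  | @insert a T ha ih =>
    obtain ⟨c, hck, hc⟩ := ih fun v hv => (card_le_card (filter_subset_filter _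
      (subset_insert a T))).trans_lt (h v (mem_insert_of_mem hv))
    obtain ⟨i, hi⟩ : (range k \ {w ∈ T | G.Adj a w}.image c).Nonempty := by
      have hdeg := h a (mem_insert_self a T)
      rw [filter_insert, if_neg G.irrefl] at hdeg
      rw [← card_pos]
      calc 0 < #(range k) - #({w ∈ T | G.Adj a w}.image c) := by
            rw [card_range]; exact Nat.sub_pos_of_lt (card_image_le.trans_lt hdeg)
        _ ≤ _ := le_card_sdiff _ _
    simp only [mem_sdiff, mem_range, mem_image, mem_filter, not_exists, not_and, and_imp] at hi
    have hane : ∀ v ∈ T, v ≠ a := fun v hv hva => ha (hva ▸ hv)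
    refine ⟨Function.update c a i, fun v hv => ?_, fun u hu v hv huv => ?_⟩
    · rcases mem_insert.mp hv with rfl | hv
      · simpa using hi.1
      · simpa [hane v hv] using hck v hv
    · rcases mem_insert.mp hu with rfl | hu' <;> rcases mem_insert.mp hv with rfl | hv'
      · exact absurd huv G.irrefl
      · simpa [hane v hv'] using fun h => hi.2 v hv' huv h.symm
      · simpa [hane u hu'] using hi.2 u hu' huv.symm
      · simpa [hane u hu', hane v hv'] using hc u hu' v hv' huv

theorem colorable_cliqueNum_of_adj_trans [Fintype V] [DecidableEq V] [DecidableRel G.Adj]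
    (htrans : ∀ u v w, G.Adj u v → G.Adj v w → u ≠ w → G.Adj u w) :
    G.Colorable G.cliqueNum := by
  have hdeg : ∀ v, G.degree v < G.cliqueNum := fun v => by
    have hclique : G.IsClique (insert v (G.neighborFinset v) : Finset V) := by
      rw [coe_insert, isClique_insert]
      refine ⟨fun a ha b hb hab => ?_, fun b hb _ => by simpa using hb⟩
      simp only [coe_neighborFinset, mem_neighborSet] at ha hb
      exact htrans a v b ha.symm hb hab
    have := hclique.card_le_cliqueNum
    rwa [card_insert_of_notMem (by simp), card_neighborFinset_eq_degree] at this
  obtain ⟨c, hck, hc⟩ := exists_coloring_on_of_card_adj_lt univ G.cliqueNum fun v _ => by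
    simpa [← neighborFinset_eq_filter] using hdeg v
  exact colorable_of_forall_lt c (fun v => hck v (mem_univ v)) fun u v huv =>
    hc u (mem_univ u) v (mem_univ v) huv

/-- The vertices of `C` are colored from a palette of `#C - 2` colors and those outside `C`, which
are adjacent to all of `C`, from a disjoint palette of `Δ + 1 - #C` colors. -/
theorem colorable_maxDegree_sub_one_of_join [Fintype V] [DecidableEq V] [DecidableRel G.Adj]
    (C : Finset V) (hC : ∀ v ∈ C, #{w ∈ C | G.Adj v w} + 3 ≤ #C)
    (hjoin : ∀ s ∉ C, ∀ v ∈ C, G.Adj s v) (hCne : C.Nonempty) (hs : ∃ s, s ∉ C) :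
    G.Colorable (G.maxDegree - 1) := by
  obtain ⟨s₀, hs₀⟩ := hs
  have hCΔ : #C ≤ G.maxDegree := by
    refine le_trans ?_ (G.degree_le_maxDegree s₀)
    rw [← card_neighborFinset_eq_degree]
    exact card_le_card fun v hv => (mem_neighborFinset _ _ _).mpr (hjoin s₀ hs₀ v hv)
  have hC3 : 3 ≤ #C := by obtain ⟨v, hv⟩ := hCne; have := hC v hv; omega
  obtain ⟨c₁, hc₁k, hc₁⟩ := exists_coloring_on_of_card_adj_lt (G := G) C (#C - 2)
    fun v hv => by have := hC v hv; omega
  obtain ⟨c₂, hc₂k, hc₂⟩ := exists_coloring_on_of_card_adj_lt (G := G) Cᶜ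
    (G.maxDegree + 1 - #C) fun s hs => by
      have hdisj : Disjoint {w ∈ Cᶜ | G.Adj s w} C :=
        Finset.disjoint_left.mpr fun _ hw => mem_compl.mp (mem_filter.mp hw).1
      have hsub : {w ∈ Cᶜ | G.Adj s w} ∪ C ⊆ G.neighborFinset s := fun w hw => by
        rcases mem_union.mp hw with hw | hw
        · exact (mem_neighborFinset _ _ _).mpr (mem_filter.mp hw).2
        · exact (mem_neighborFinset _ _ _).mpr (hjoin s (mem_compl.mp hs) w hw)
      have := card_le_card hsub
      rw [card_union_of_disjoint hdisj, card_neighborFinset_eq_degree] at this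
      have := G.degree_le_maxDegree s
      omega
  refine colorable_of_forall_lt (fun v => if v ∈ C then c₁ v else #C - 2 + c₂ v) (fun v => ?_)
    fun u v huv => ?_
  · by_cases hv : v ∈ C
    · have := hc₁k v hv; simp only [hv, if_true]; omega
    · have := hc₂k v (mem_compl.mpr hv); simp only [hv, if_false]; omega
  · by_cases hu : u ∈ C <;> by_cases hv : v ∈ C <;> simp only [hu, hv, if_true, if_false]
    · exact hc₁ u hu v hv huv
    · have := hc₁k u hu; omega
    · have := hc₁k v hv; omega
    · have := hc₂ u (mem_compl.mpr hu) v (mem_compl.mpr hv) huv; omega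

theorem card_filter_adj_add_three_le [DecidableEq V] [DecidableRel G.Adj] {C : Finset V}
    {v t₁ t₂ : V} (hv : v ∈ C) (ht₁ : t₁ ∈ C) (ht₂ : t₂ ∈ C) (h₁₂ : t₁ ≠ t₂) (hvt₁ : v ≠ t₁)
    (hvt₂ : v ≠ t₂) (hv₁ : ¬G.Adj v t₁) (hv₂ : ¬G.Adj v t₂) : #{w ∈ C | G.Adj v w} + 3 ≤ #C := by
  have htriple : {v, t₁, t₂} ⊆ C := by
    simpa only [insert_subset_iff, singleton_subset_iff] using ⟨hv, ht₁, ht₂⟩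
  have hsub : {w ∈ C | G.Adj v w} ⊆ C \ {v, t₁, t₂} := fun w hw => by
    rw [mem_filter] at hw
    simp only [mem_sdiff, mem_insert, mem_singleton, not_or]
    exact ⟨hw.1, hw.2.ne', fun h => hv₁ (h ▸ hw.2), fun h => hv₂ (h ▸ hw.2)⟩
  calc #{w ∈ C | G.Adj v w} + 3 ≤ #(C \ {v, t₁, t₂}) + #{v, t₁, t₂} := by
        rw [card_insert_of_notMem (by simp [hvt₁, hvt₂]), card_pair h₁₂]
        gcongr
    _ = #C := card_sdiff_add_card_eq_card htriple

/-! ### Three independent vertices -/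

theorem adj_of_adj_of_adj_of_isIndepSet (hfree : ¬Nonempty (P3UnionK1 ↪g G)) {T : Set V}
    (hT : G.IsIndepSet T) {v t₁ t₂ t : V} (ht₁ : t₁ ∈ T) (ht₂ : t₂ ∈ T) (ht : t ∈ T)
    (h₁₂ : t₁ ≠ t₂) (hv₁ : G.Adj v t₁) (hv₂ : G.Adj v t₂) : G.Adj v t := by
  by_contra hvt
  have ht₁' : t ≠ t₁ := by rintro rfl; exact hvt hv₁
  have ht₂' : t ≠ t₂ := by rintro rfl; exact hvt hv₂
  exact hfree (nonempty_P3UnionK1_embedding hv₁.symm hv₂ (hT ht₁ ht₂ h₁₂) h₁₂ ht₁' ht₂'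
    (hT ht ht₁ ht₁') (fun h => hvt h.symm) (hT ht ht₂ ht₂'))

theorem exists_not_adj_of_isNIndepSet (hfree : ¬Nonempty (P3UnionK1 ↪g G))
    {T : Finset V} (hT : G.IsNIndepSet 3 T) {v : V} (hv : ∃ t ∈ T, ¬G.Adj v t) :
    ∃ t₁ ∈ T, ∃ t₂ ∈ T, t₁ ≠ t₂ ∧ v ≠ t₁ ∧ v ≠ t₂ ∧ ¬G.Adj v t₁ ∧ ¬G.Adj v t₂ := by
  classical
  have hnear : #{t ∈ T | t = v ∨ G.Adj v t} ≤ 1 := by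
    refine card_le_one.mpr fun a ha b hb => ?_
    simp only [mem_filter] at ha hb
    by_contra hab
    rcases ha with ⟨ha, rfl | hva⟩ <;> rcases hb with ⟨hb, rfl | hvb⟩
    · exact hab rfl
    · exact hT.isIndepSet ha hb hab hvb
    · exact hT.isIndepSet hb ha (Ne.symm hab) hva
    · obtain ⟨t, ht, hvt⟩ := hv
      exact hvt (adj_of_adj_of_adj_of_isIndepSet hfree hT.isIndepSet ha hb ht hab hva hvb)
  have hfar := card_filter_add_card_filter_not (s := T) fun t => t = v ∨ G.Adj v t
  rw [hT.card_eq] at hfar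
  obtain ⟨t₁, ht₁, t₂, ht₂, h₁₂⟩ :=
    one_lt_card.mp (show 1 < #{t ∈ T | ¬(t = v ∨ G.Adj v t)} by omega)
  simp only [mem_filter, not_or] at ht₁ ht₂
  exact ⟨t₁, ht₁.1, t₂, ht₂.1, h₁₂, Ne.symm ht₁.2.1, Ne.symm ht₂.2.1, ht₁.2.2, ht₂.2.2⟩

/-- Without a common neighbour of `T`, every vertex `v` has two non-neighbours `t₁ t₂` in `T`, and
neither is adjacent to a neighbour `z` of `v`: else `t₁ z v` plus `t₂` is a `P3 ∪ K1`. -/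
theorem adj_trans_of_isNIndepSet (hfree : ¬Nonempty (P3UnionK1 ↪g G)) {T : Finset V}
    (hT : G.IsNIndepSet 3 T) (hS : ∀ v, ∃ t ∈ T, ¬G.Adj v t) {u v w : V} (huv : G.Adj u v)
    (hvw : G.Adj v w) (huw : u ≠ w) : G.Adj u w := by
  by_contra hadj
  obtain ⟨t₁, ht₁, t₂, ht₂, h₁₂, hvt₁, hvt₂, hv₁, hv₂⟩ :=
    exists_not_adj_of_isNIndepSet hfree hT (hS v)
  have hfar : ∀ z, G.Adj z v → ¬G.Adj z t₁ := by
    intro z hzv hzt₁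
    have hzt₂ : ¬G.Adj z t₂ := fun hzt₂ => by
      obtain ⟨t, ht, hzt⟩ := hS z
      exact hzt (adj_of_adj_of_adj_of_isIndepSet hfree hT.isIndepSet ht₁ ht₂ ht h₁₂ hzt₁ hzt₂)
    exact hfree (nonempty_P3UnionK1_embedding hzt₁.symm hzv (fun h => hv₁ h.symm) (Ne.symm hvt₁)
      (Ne.symm h₁₂) (Ne.symm hvt₂) (hT.isIndepSet ht₂ ht₁ (Ne.symm h₁₂))
      (fun h => hzt₂ h.symm) (fun h => hv₂ h.symm))
  have hu₁ : u ≠ t₁ := by rintro rfl; exact hv₁ huv.symm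
  have hw₁ : w ≠ t₁ := by rintro rfl; exact hv₁ hvw
  exact hfree (nonempty_P3UnionK1_embedding huv hvw hadj huw (Ne.symm hu₁) (Ne.symm hw₁)
    (fun h => hfar u huv h.symm) (fun h => hv₁ h.symm) (fun h => hfar w hvw.symm h.symm))

theorem colorable_of_isNIndepSet [Fintype V] [DecidableRel G.Adj]
    (hfree : ¬Nonempty (P3UnionK1 ↪g G)) {T : Finset V} (hT : G.IsNIndepSet 3 T) :
    G.Colorable (max (G.maxDegree - 1) G.cliqueNum) := by
  classical
  by_cases hS : ∀ v, ∃ t ∈ T, ¬G.Adj v t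
  · exact (colorable_cliqueNum_of_adj_trans fun u v w =>
      adj_trans_of_isNIndepSet hfree hT hS).mono (le_max_right _ _)
  push Not at hS
  obtain ⟨s₀, hs₀⟩ := hS
  set C : Finset V := {v | ∃ t ∈ T, ¬G.Adj v t}
  have hmemC : ∀ v, v ∈ C ↔ ∃ t ∈ T, ¬G.Adj v t := fun v => by simp [C]
  have hTC : ∀ t ∈ T, t ∈ C := fun t ht => (hmemC t).mpr ⟨t, ht, G.irrefl⟩
  refine (colorable_maxDegree_sub_one_of_join C (fun v hv => ?_) (fun s hs v hv => ?_) ?_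
    ⟨s₀, fun h => ?_⟩).mono (le_max_left _ _)
  · obtain ⟨t₁, ht₁, t₂, ht₂, h₁₂, hvt₁, hvt₂, hv₁, hv₂⟩ :=
      exists_not_adj_of_isNIndepSet hfree hT ((hmemC v).mp hv)
    exact card_filter_adj_add_three_le hv (hTC t₁ ht₁) (hTC t₂ ht₂) h₁₂ hvt₁ hvt₂ hv₁ hv₂
  · by_contra hsv
    obtain ⟨t₁, ht₁, t₂, ht₂, h₁₂, hvt₁, hvt₂, hv₁, hv₂⟩ :=
      exists_not_adj_of_isNIndepSet hfree hT ((hmemC v).mp hv)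
    have hst : ∀ t ∈ T, G.Adj s t := by simpa [hmemC] using hs
    exact hfree (nonempty_P3UnionK1_embedding (hst t₁ ht₁).symm (hst t₂ ht₂)
      (hT.isIndepSet ht₁ ht₂ h₁₂) h₁₂ hvt₁ hvt₂ hv₁ (fun h => hsv h.symm) hv₂)
  · obtain ⟨t, ht⟩ := card_pos.mp (hT.card_eq ▸ three_pos)
    exact ⟨t, hTC t ht⟩
  · obtain ⟨t, ht, hnt⟩ := (hmemC _).mp h
    exact hnt (hs₀ t ht)

/-! ### Matchings -/

def MatchableInto (H : SimpleGraph V) (S : Finset V) : Prop :=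
  ∃ f : V → V, Set.InjOn f (↑S)ᶜ ∧ ∀ x ∉ S, f x ∈ S ∧ H.Adj x (f x)

/-- A vertex outside `S` gets the color of its partner in `S`: the partners are not adjacent in
`G`, and distinct vertices outside `S` have distinct partners. -/
theorem colorable_of_compl_matchableInto {S : Finset V} (h : Gᶜ.MatchableInto S) :
    G.Colorable #S := by
  classical
  obtain ⟨f, hinj, hf⟩ := h
  let c : V → S := fun v => if hv : v ∈ S then ⟨v, hv⟩ else ⟨f v, (hf v hv).1⟩
  have hc : ∀ ⦃u v⦄, G.Adj u v → c u ≠ c v := by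
    intro u v huv hcuv
    by_cases hu : u ∈ S <;> by_cases hv : v ∈ S <;>
      simp only [c, hu, hv, dite_true, dite_false, Subtype.mk.injEq] at hcuv
    · exact huv.ne hcuv
    · exact (compl_adj G v (f v)).mp (hf v hv).2 |>.2 (hcuv ▸ huv.symm)
    · exact (compl_adj G u (f u)).mp (hf u hu).2 |>.2 (hcuv ▸ huv)
    · exact huv.ne (hinj hu hv hcuv)
  simpa using (Coloring.mk c fun huv => hc huv).colorable

/-- Hall's condition holds for `Sᶜ`: a set of at most `δ` vertices has at least `δ` neighbours,
and all of `Sᶜ` has all of `S` as neighbours, as every vertex of `S` has a neighbour. -/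
theorem matchableInto_of_isIndepSet [Fintype V] [DecidableEq V] [DecidableRel H.Adj] {δ : ℕ}
    (hδ : ∀ v, δ ≤ H.degree v) (hδ₀ : 0 < δ) {S : Finset V} (hS : H.IsIndepSet S)
    (hSc : H.IsIndepSet (↑S)ᶜ) (hcard : #Sᶜ ≤ #S) (hsmall : #Sᶜ ≤ δ + 1) :
    H.MatchableInto S := by
  have hall : ∀ s : Finset (Sᶜ : Finset V), #s ≤ #(s.biUnion fun x => H.neighborFinset x) := by
    intro s
    obtain rfl | ⟨x, hx⟩ := s.eq_empty_or_nonempty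
    · simp
    by_cases hs : #s ≤ δ
    · calc #s ≤ H.degree x := hs.trans (hδ x)
        _ ≤ _ := by
          rw [← card_neighborFinset_eq_degree]
          exact card_le_card (subset_biUnion_of_mem (fun x : (Sᶜ : Finset V) =>
            H.neighborFinset x) hx)
    have := card_le_univ s
    rw [Fintype.card_coe] at this
    have hsuniv : s = univ := eq_univ_of_card s (by rw [Fintype.card_coe]; omega)
    calc #s ≤ #S := by rwa [hsuniv, card_univ, Fintype.card_coe]
      _ ≤ _ := card_le_card fun q hq => ?_
    obtain ⟨p, hqp⟩ := (H.degree_pos_iff_exists_adj q).mp (hδ₀.trans_le (hδ q))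
    have hp : p ∈ Sᶜ := mem_compl.mpr fun hpS => hS (mem_coe.mpr hq) (mem_coe.mpr hpS) hqp.ne hqp
    exact mem_biUnion.mpr ⟨⟨p, hp⟩, hsuniv ▸ mem_univ _, (mem_neighborFinset _ _ _).mpr hqp.symm⟩
  obtain ⟨f, hfinj, hf⟩ := (all_card_le_biUnion_card_iff_existsInjective' _).mp hall
  have hfadj : ∀ x : (Sᶜ : Finset V), H.Adj x (f x) :=
    fun x => (mem_neighborFinset _ _ _).mp (hf x)
  have hfS : ∀ x : (Sᶜ : Finset V), f x ∈ S := fun x => by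
    by_contra h
    exact hSc (by simpa using mem_compl.mp x.2) (by simpa using h) (hfadj x).ne (hfadj x)
  refine ⟨fun v => if hv : v ∈ Sᶜ then f ⟨v, hv⟩ else v, fun x hx y hy hxy => ?_, fun x hx => ?_⟩
  · have hx' : x ∈ Sᶜ := by simpa using hx
    have hy' : y ∈ Sᶜ := by simpa using hy
    simp only [hx', hy', dite_true] at hxy
    exact congrArg Subtype.val (hfinj hxy)
  · have hx' : x ∈ Sᶜ := mem_compl.mpr hx
    simp only [hx', dite_true]
    exact ⟨hfS _, hfadj ⟨x, hx'⟩⟩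

/-- A matching as a finset of pairwise disjoint edges rather than a `Subgraph`, so that its size is
a `Finset.card` and exchanging edges is `insert` and `erase`. -/
structure IsEdgeMatching (H : SimpleGraph V) (M : Finset (Sym2 V)) : Prop where
  mem_edgeSet : ∀ e ∈ M, e ∈ H.edgeSet
  eq_of_mem : ∀ e ∈ M, ∀ f ∈ M, ∀ x ∈ e, x ∈ f → e = f

def IsExposed (M : Finset (Sym2 V)) (x : V) : Prop := ∀ e ∈ M, x ∉ e

instance [DecidableEq V] (M : Finset (Sym2 V)) : DecidablePred (IsExposed M) :=
  fun x => inferInstanceAs (Decidable (∀ e ∈ M, x ∉ e))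

structure IsMaximumEdgeMatching (H : SimpleGraph V) (M : Finset (Sym2 V)) : Prop where
  isEdgeMatching : H.IsEdgeMatching M
  card_le : ∀ N, H.IsEdgeMatching N → #N ≤ #M

theorem card_le_card_isExposed_add [Fintype V] [DecidableEq V] (M : Finset (Sym2 V)) :
    Fintype.card V ≤ #{x | IsExposed M x} + 2 * #M := by
  have hcover : univ ⊆ ({x | IsExposed M x} : Finset V) ∪ M.biUnion Sym2.toFinset := by
    intro x _
    by_cases hx : IsExposed M x
    · simp [hx]
    · simp only [IsExposed, not_forall, not_not] at hx
      obtain ⟨e, he, hxe⟩ := hx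
      exact mem_union_right _ (mem_biUnion.mpr ⟨e, he, Sym2.mem_toFinset.mpr hxe⟩)
  have hverts := card_biUnion_le_card_mul M Sym2.toFinset 2 fun e _ => by
    rw [Sym2.card_toFinset]; split_ifs <;> omega
  have := (card_le_card hcover).trans (card_union_le _ _)
  rw [card_univ] at this
  omega

namespace IsEdgeMatching

variable {M : Finset (Sym2 V)}

theorem mono {N : Finset (Sym2 V)} (hM : H.IsEdgeMatching M) (h : N ⊆ M) :
    H.IsEdgeMatching N :=
  ⟨fun e he => hM.mem_edgeSet e (h he), fun e he f hf => hM.eq_of_mem e (h he) f (h hf)⟩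

theorem adj (hM : H.IsEdgeMatching M) {x y : V} (h : s(x, y) ∈ M) : H.Adj x y :=
  hM.mem_edgeSet _ h

theorem isExposed_erase [DecidableEq V] (hM : H.IsEdgeMatching M) {e : Sym2 V} (he : e ∈ M)
    {x : V} (hx : x ∈ e) : IsExposed (M.erase e) x := fun f hf hxf =>
  ne_of_mem_erase hf (hM.eq_of_mem f (mem_of_mem_erase hf) e he x hxf hx)

theorem insert [DecidableEq V] (hM : H.IsEdgeMatching M) {u v : V} (hu : IsExposed M u)
    (hv : IsExposed M v) (huv : H.Adj u v) :
    H.IsEdgeMatching (insert s(u, v) M) ∧ #(insert s(u, v) M) = #M + 1 := by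
  refine ⟨⟨?_, ?_⟩, card_insert_of_notMem fun h => hu _ h (Sym2.mem_mk_left u v)⟩
  · simpa [forall_mem_insert] using ⟨huv, hM.mem_edgeSet⟩
  · have hnew : ∀ f ∈ M, ∀ x ∈ s(u, v), x ∉ f := by
      rintro f hf x hx
      rcases Sym2.mem_iff.mp hx with rfl | rfl
      exacts [hu f hf, hv f hf]
    intro e he f hf x hxe hxf
    rcases mem_insert.mp he with rfl | he <;> rcases mem_insert.mp hf with rfl | hf
    · rfl
    · exact absurd hxf (hnew f hf x hxe)
    · exact absurd hxe (hnew e he x hxf)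
    · exact hM.eq_of_mem e he f hf x hxe hxf

theorem matchableInto {S : Finset V} (hM : H.IsEdgeMatching M)
    (hexp : ∀ x, IsExposed M x → x ∈ S) (hmeet : ∀ e ∈ M, ∃ y ∈ e, y ∈ S) :
    H.MatchableInto S := by
  have hpartner : ∀ x ∉ S, ∃ y ∈ S, s(x, y) ∈ M := by
    intro x hx
    obtain ⟨e, he, hxe⟩ : ∃ e ∈ M, x ∈ e := by
      by_contra h
      exact hx (hexp x fun e he hxe => h ⟨e, he, hxe⟩)
    obtain ⟨y, hye, hy⟩ := hmeet e he
    have hxy : x ≠ y := fun h => hx (h ▸ hy)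
    exact ⟨y, hy, (Sym2.mem_and_mem_iff hxy).mp ⟨hxe, hye⟩ ▸ he⟩
  choose! f hfS hfM using hpartner
  refine ⟨f, fun x hx x' hx' hxx' => ?_, fun x hx => ⟨hfS x hx, hM.adj (hfM x hx)⟩⟩
  have := hM.eq_of_mem _ (hfM x hx) _ (hfM x' hx') (f x) (Sym2.mem_mk_right _ _)
    (hxx' ▸ Sym2.mem_mk_right _ _)
  rw [hxx'] at this
  exact Sym2.congr_left.mp this

theorem exists_matchableInto [Fintype V] [DecidableEq V] (hM : H.IsEdgeMatching M) :
    ∃ S : Finset V, #S + #M = Fintype.card V ∧ H.MatchableInto S := by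
  set R := M.image fun e => e.out.1
  have hRM : #R = #M := card_image_of_injOn fun e he f hf h =>
    hM.eq_of_mem e he f hf _ (Sym2.out_fst_mem e) (h ▸ Sym2.out_fst_mem f)
  refine ⟨Rᶜ, by rw [card_compl, hRM, Nat.sub_add_cancel (hRM ▸ card_le_univ R)], ?_⟩
  refine hM.matchableInto (fun x hx => ?_) fun e he => ⟨e.out.2, Sym2.out_snd_mem e, ?_⟩
  · simp only [R, mem_compl, mem_image, not_exists, not_and]
    exact fun e he h => hx e he (h ▸ Sym2.out_fst_mem e)
  · simp only [R, mem_compl, mem_image, not_exists, not_and]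
    intro f hf h
    have hfe := hM.eq_of_mem f hf e he _ (Sym2.out_fst_mem f) (h ▸ Sym2.out_snd_mem e)
    subst hfe
    refine H.not_isDiag_of_mem_edgeSet (hM.mem_edgeSet f hf) ?_
    rw [← Quot.out_eq f]
    exact Sym2.mk_isDiag_iff.mpr h

end IsEdgeMatching

theorem exists_isMaximumEdgeMatching [Fintype V] [DecidableEq V] (H : SimpleGraph V) :
    ∃ M, H.IsMaximumEdgeMatching M := by
  classical
  obtain ⟨M, hM, hmax⟩ := exists_max_image {M : Finset (Sym2 V) | H.IsEdgeMatching M} card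
    ⟨∅, by simpa using ⟨by simp, by simp⟩⟩
  exact ⟨M, (mem_filter.mp hM).2, fun N hN => hmax N (by simpa using hN)⟩

namespace IsMaximumEdgeMatching

variable [DecidableEq V] {M : Finset (Sym2 V)}

theorem not_adj (hM : H.IsMaximumEdgeMatching M) {u v : V} (hu : IsExposed M u)
    (hv : IsExposed M v) : ¬H.Adj u v := fun huv => by
  have := hM.card_le _ (hM.isEdgeMatching.insert hu hv huv).1
  rw [(hM.isEdgeMatching.insert hu hv huv).2] at this
  omega

/-- Exchanging the matched edge `ab` for `ua` keeps the matching maximum and exposes `b`. -/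
theorem shift (hM : H.IsMaximumEdgeMatching M) {a b u : V} (hab : s(a, b) ∈ M)
    (hu : IsExposed M u) (hua : H.Adj u a) :
    ∃ N, H.IsMaximumEdgeMatching N ∧ IsExposed N b ∧
      (∀ x, IsExposed M x → x ≠ u → IsExposed N x) ∧ ∀ e ∈ M, e ≠ s(a, b) → e ∈ N := by
  have hM' := hM.isEdgeMatching.mono (erase_subset s(a, b) M)
  have hu' : IsExposed (M.erase s(a, b)) u := fun e he => hu e (mem_of_mem_erase he)
  obtain ⟨hN, hcard⟩ := hM'.insert hu'
    (hM.isEdgeMatching.isExposed_erase hab (Sym2.mem_mk_left a b)) hua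
  have hbu : b ≠ u := fun h => hu _ hab (h ▸ Sym2.mem_mk_right a b)
  have hba : b ≠ a := (hM.isEdgeMatching.adj hab).ne'
  refine ⟨_, ⟨hN, fun N' hN' => ?_⟩, ?_, ?_, fun e he hne =>
    mem_insert_of_mem (mem_erase.mpr ⟨hne, he⟩)⟩
  · rw [hcard, card_erase_of_mem hab]
    have := card_pos.mpr ⟨_, hab⟩
    have := hM.card_le N' hN'
    omega
  · intro e he hbe
    rcases mem_insert.mp he with rfl | he
    · rcases Sym2.mem_iff.mp hbe with h | h
      exacts [hbu h, hba h]
    · exact hM.isEdgeMatching.isExposed_erase hab (Sym2.mem_mk_right a b) e he hbe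
  · intro x hx hxu e he hxe
    rcases mem_insert.mp he with rfl | he
    · rcases Sym2.mem_iff.mp hxe with h | rfl
      exacts [hxu h, hx _ hab (Sym2.mem_mk_left _ b)]
    · exact hx e (mem_of_mem_erase he) hxe

theorem not_augmenting_path_three (hM : H.IsMaximumEdgeMatching M) {u a b u' : V}
    (hu : IsExposed M u) (hu' : IsExposed M u') (huu' : u ≠ u') (hab : s(a, b) ∈ M)
    (hua : H.Adj u a) (hbu' : H.Adj b u') : False := by
  obtain ⟨N, hN, hb, hexp, -⟩ := hM.shift hab hu hua
  exact hN.not_adj hb (hexp u' hu' huu'.symm) hbu'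

theorem not_augmenting_path_five (hM : H.IsMaximumEdgeMatching M) {u a b c d u' : V}
    (hu : IsExposed M u) (hu' : IsExposed M u') (huu' : u ≠ u') (hab : s(a, b) ∈ M)
    (hcd : s(c, d) ∈ M) (hne : s(c, d) ≠ s(a, b))
    (hua : H.Adj u a) (hbc : H.Adj b c) (hdu' : H.Adj d u') : False := by
  obtain ⟨N, hN, hb, hexp, hmem⟩ := hM.shift hab hu hua
  have hbu' : b ≠ u' := fun h => hu' _ hab (h ▸ Sym2.mem_mk_right a b)
  exact hN.not_augmenting_path_three hb (hexp u' hu' huu'.symm) hbu' (hmem _ hcd hne) hbc hdu'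

theorem not_augmenting_path_seven (hM : H.IsMaximumEdgeMatching M) {u a b c d e f u' : V}
    (hu : IsExposed M u) (hu' : IsExposed M u') (huu' : u ≠ u') (hab : s(a, b) ∈ M)
    (hcd : s(c, d) ∈ M) (hef : s(e, f) ∈ M) (hne₁ : s(c, d) ≠ s(a, b))
    (hne₂ : s(e, f) ≠ s(a, b)) (hne₃ : s(e, f) ≠ s(c, d))
    (hua : H.Adj u a) (hbc : H.Adj b c) (hde : H.Adj d e) (hfu' : H.Adj f u') : False := by
  obtain ⟨N, hN, hb, hexp, hmem⟩ := hM.shift hab hu hua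
  have hbu' : b ≠ u' := fun h => hu' _ hab (h ▸ Sym2.mem_mk_right a b)
  exact hN.not_augmenting_path_five hb (hexp u' hu' huu'.symm) hbu' (hmem _ hcd hne₁)
    (hmem _ hef hne₂) hne₃ hbc hde hfu'

end IsMaximumEdgeMatching

/-! ### Triangle-free graphs -/

theorem CliqueFree.not_adj_of_adj_of_adj (hH : H.CliqueFree 3) {a b c : V} (hab : H.Adj a b)
    (hac : H.Adj a c) : ¬H.Adj b c := fun hbc =>
  isIndepSet_neighborSet_of_triangleFree H hH a hab hac hbc.ne hbc

def SeesExposed (H : SimpleGraph V) (M : Finset (Sym2 V)) (x : V) : Prop :=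
  ∃ u, IsExposed M u ∧ H.Adj u x

/-- `y` is exposed, or is the far end of an alternating path `u x y` from an exposed `u`. -/
def IsOuter (H : SimpleGraph V) (M : Finset (Sym2 V)) (y : V) : Prop :=
  IsExposed M y ∨ ∃ x, s(x, y) ∈ M ∧ H.SeesExposed M x

namespace IsMaximumEdgeMatching

variable [DecidableEq V] {M : Finset (Sym2 V)}

theorem not_seesExposed_of_mem (hH : H.CliqueFree 3) (hM : H.IsMaximumEdgeMatching M)
    {x y : V} (hxy : s(x, y) ∈ M) (hx : H.SeesExposed M x) : ¬H.SeesExposed M y := by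
  rintro ⟨u', hu', hu'y⟩
  obtain ⟨u, hu, hux⟩ := hx
  obtain rfl | huu' := eq_or_ne u u'
  · exact hH.not_adj_of_adj_of_adj hux hu'y (hM.isEdgeMatching.adj hxy)
  · exact hM.not_augmenting_path_three hu hu' huu' hxy hux hu'y.symm

theorem not_seesExposed_of_isOuter (hH : H.CliqueFree 3) (hM : H.IsMaximumEdgeMatching M)
    {y : V} (hy : H.IsOuter M y) : ¬H.SeesExposed M y := by
  rcases hy with hy | ⟨x, hxy, hx⟩
  · exact fun ⟨u, hu, huy⟩ => hM.not_adj hu hy huy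
  · exact hM.not_seesExposed_of_mem hH hxy hx

theorem ne_of_seesExposed (hH : H.CliqueFree 3) (hM : H.IsMaximumEdgeMatching M)
    {x y x' z : V} (hx'z : s(x', z) ∈ M) (hx : H.SeesExposed M x)
    (hx' : H.SeesExposed M x') (hyz : y ≠ z) : s(x', z) ≠ s(x, y) := by
  intro h
  have hzx : z = x := by
    simpa [hyz.symm] using (h ▸ Sym2.mem_mk_right x' z : z ∈ s(x, y))
  exact hM.not_seesExposed_of_mem hH hx'z hx' (hzx ▸ hx)

/-- An exposed vertex misses at most one edge of a small maximum matching: its at least `δ`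
neighbours lie on pairwise distinct edges, since `H` has no triangles. -/
theorem exists_adj_mem_or_exists_adj_mem (hH : H.CliqueFree 3)
    (hM : H.IsMaximumEdgeMatching M) [Fintype V] [DecidableRel H.Adj] {δ : ℕ}
    (hδ : ∀ v, δ ≤ H.degree v) (hcard : #M ≤ δ + 1) {u : V} (hu : IsExposed M u)
    {e f : Sym2 V} (he : e ∈ M) (hf : f ∈ M) (hef : e ≠ f) :
    (∃ x ∈ e, H.Adj u x) ∨ ∃ x ∈ f, H.Adj u x := by
  by_contra! hno
  have hle : H.degree u ≤ #((M.erase e).erase f) := by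
    rw [← card_neighborFinset_eq_degree]
    refine card_le_card_of_forall_subsingleton (· ∈ ·) (fun x hx => ?_)
      fun g hg x hx x' hx' => ?_
    · rw [mem_neighborFinset] at hx
      obtain ⟨g, hg, hxg⟩ : ∃ g ∈ M, x ∈ g := by
        by_contra! h
        exact hM.not_adj hu h hx
      refine ⟨g, mem_erase.mpr ⟨?_, mem_erase.mpr ⟨?_, hg⟩⟩, hxg⟩
      · rintro rfl; exact hno.2 x hxg hx
      · rintro rfl; exact hno.1 x hxg hx
    · by_contra hxx'
      replace hg := hM.isEdgeMatching.mem_edgeSet g (mem_of_mem_erase (mem_of_mem_erase hg))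
      rw [(Sym2.mem_and_mem_iff hxx').mp ⟨hx.2, hx'.2⟩, mem_edgeSet] at hg
      exact hH.not_adj_of_adj_of_adj (mem_neighborFinset _ _ _ |>.mp hx.1)
        (mem_neighborFinset _ _ _ |>.mp hx'.1) hg
  rw [card_erase_of_mem (mem_erase.mpr ⟨hef.symm, hf⟩), card_erase_of_mem he] at hle
  have := hδ u
  have := card_le_card (insert_subset he (singleton_subset_iff.mpr hf))
  rw [card_pair hef] at this
  omega

theorem exists_seesExposed_mem_of_ne (hH : H.CliqueFree 3) (hM : H.IsMaximumEdgeMatching M)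
    [Fintype V] [DecidableRel H.Adj] {δ : ℕ} (hδ : ∀ v, δ ≤ H.degree v) (hcard : #M ≤ δ + 1)
    (hU : 0 < #{u | IsExposed M u}) {a b : V} (hab : s(a, b) ∈ M) (ha : ¬H.SeesExposed M a)
    (hb : ¬H.SeesExposed M b) {e : Sym2 V} (he : e ∈ M) (hne : e ≠ s(a, b)) :
    ∃ x ∈ e, H.SeesExposed M x := by
  obtain ⟨u, hu⟩ := card_pos.mp hU
  rw [mem_filter] at hu
  rcases hM.exists_adj_mem_or_exists_adj_mem hH hδ hcard hu.2 he hab hne with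
    ⟨x, hxe, hux⟩ | ⟨x, hx, hux⟩
  · exact ⟨x, hxe, u, hu.2, hux⟩
  · rcases Sym2.mem_iff.mp hx with rfl | rfl
    exacts [absurd ⟨u, hu.2, hux⟩ ha, absurd ⟨u, hu.2, hux⟩ hb]

theorem exists_ne_adj_of_seesExposed (hH : H.CliqueFree 3) (hM : H.IsMaximumEdgeMatching M)
    [Fintype V] [DecidableRel H.Adj] {δ : ℕ} (hδ : ∀ v, δ ≤ H.degree v) (hcard : #M ≤ δ + 1)
    (hU : 1 < #{u | IsExposed M u}) {x y x' z : V} (hxy : s(x, y) ∈ M) (hx'z : s(x', z) ∈ M)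
    (hne : s(x', z) ≠ s(x, y)) (hx : H.SeesExposed M x) (hx' : H.SeesExposed M x') :
    ∃ u u', IsExposed M u ∧ IsExposed M u' ∧ u ≠ u' ∧ H.Adj u x ∧ H.Adj u' x' := by
  obtain ⟨u, hu, hux⟩ := hx
  obtain ⟨u', hu', hu'x'⟩ := hx'
  obtain huu' | rfl := ne_or_eq u u'
  · exact ⟨u, u', hu, hu', huu', hux, hu'x'⟩
  obtain ⟨w, hw, hwu⟩ := exists_mem_ne hU u
  rw [mem_filter] at hw
  rcases hM.exists_adj_mem_or_exists_adj_mem hH hδ hcard hw.2 hxy hx'z hne.symm with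
    ⟨t, ht, hwt⟩ | ⟨t, ht, hwt⟩
  · obtain rfl | rfl := Sym2.mem_iff.mp ht
    · exact ⟨w, u, hw.2, hu, hwu, hwt, hu'x'⟩
    · exact absurd ⟨w, hw.2, hwt⟩ (hM.not_seesExposed_of_mem hH hxy ⟨u, hu, hux⟩)
  · obtain rfl | rfl := Sym2.mem_iff.mp ht
    · exact ⟨u, w, hu, hw.2, hwu.symm, hux, hwt⟩
    · exact absurd ⟨w, hw.2, hwt⟩ (hM.not_seesExposed_of_mem hH hx'z ⟨u, hu, hu'x'⟩)

theorem not_adj_of_isOuter (hH : H.CliqueFree 3) (hM : H.IsMaximumEdgeMatching M)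
    [Fintype V] [DecidableRel H.Adj] {δ : ℕ} (hδ : ∀ v, δ ≤ H.degree v) (hcard : #M ≤ δ + 1)
    (hU : 1 < #{u | IsExposed M u}) {y z : V} (hy : H.IsOuter M y) (hz : H.IsOuter M z) :
    ¬H.Adj y z := by
  intro hyz
  rcases hy with hy | ⟨x, hxy, hx⟩
  · exact hM.not_seesExposed_of_isOuter hH hz ⟨y, hy, hyz⟩
  rcases hz with hz | ⟨x', hx'z, hx'⟩
  · exact hM.not_seesExposed_of_isOuter hH (.inr ⟨x, hxy, hx⟩) ⟨z, hz, hyz.symm⟩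
  have hne := hM.ne_of_seesExposed hH hx'z hx hx' hyz.ne
  obtain ⟨u, u', hu, hu', huu', hux, hu'x'⟩ :=
    hM.exists_ne_adj_of_seesExposed hH hδ hcard hU hxy hx'z hne hx hx'
  rw [Sym2.eq_swap] at hx'z hne
  exact hM.not_augmenting_path_five hu hu' huu' hxy hx'z hne hux hyz hu'x'.symm

theorem exists_mem_not_adj_isOuter (hH : H.CliqueFree 3) (hM : H.IsMaximumEdgeMatching M)
    [Fintype V] [DecidableRel H.Adj] {δ : ℕ} (hδ : ∀ v, δ ≤ H.degree v) (hcard : #M ≤ δ + 1)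
    (hU : 1 < #{u | IsExposed M u}) {a b : V} (hab : s(a, b) ∈ M) (ha : ¬H.SeesExposed M a)
    (hb : ¬H.SeesExposed M b) : ∃ c ∈ s(a, b), ∀ y, H.IsOuter M y → ¬H.Adj c y := by
  by_contra! h
  obtain ⟨y, hy, hay⟩ := h a (Sym2.mem_mk_left a b)
  obtain ⟨z, hz, hbz⟩ := h b (Sym2.mem_mk_right a b)
  rcases hy with hy | ⟨x, hxy, hx⟩
  · exact ha ⟨y, hy, hay.symm⟩
  rcases hz with hz | ⟨x', hx'z, hx'⟩
  · exact hb ⟨z, hz, hbz.symm⟩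
  obtain rfl | hyz := eq_or_ne y z
  · exact hH.not_adj_of_adj_of_adj hay.symm hbz.symm (hM.isEdgeMatching.adj hab)
  have hne := hM.ne_of_seesExposed hH hx'z hx hx' hyz
  have hne_ab : ∀ {p q : V}, H.SeesExposed M p → s(a, b) ≠ s(p, q) := fun {p q} hp h => by
    rcases Sym2.mem_iff.mp (h ▸ Sym2.mem_mk_left p q : p ∈ s(a, b)) with hpa | hpb
    exacts [ha (hpa ▸ hp), hb (hpb ▸ hp)]
  obtain ⟨u, u', hu, hu', huu', hux, hu'x'⟩ :=
    hM.exists_ne_adj_of_seesExposed hH hδ hcard hU hxy hx'z hne hx hx'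
  rw [Sym2.eq_swap] at hx'z hne
  exact hM.not_augmenting_path_seven hu hu' huu' hxy hab hx'z (hne_ab hx) hne
    (Sym2.eq_swap (a := z) ▸ (hne_ab hx').symm) hux hay.symm hbz hu'x'.symm

/-- The outer vertices are independent and meet every edge seen by an exposed vertex; at most one
edge is seen by none, and one of its ends can be added. -/
theorem exists_isIndepSet_matchableInto (hH : H.CliqueFree 3)
    (hM : H.IsMaximumEdgeMatching M) [Fintype V] [DecidableRel H.Adj] {δ : ℕ}
    (hδ : ∀ v, δ ≤ H.degree v) (hcard : #M ≤ δ + 1) (hU : 1 < #{u | IsExposed M u}) :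
    ∃ S : Finset V, H.IsIndepSet S ∧ H.MatchableInto S := by
  classical
  set O : Finset V := {y | H.IsOuter M y}
  have hmemO : ∀ y, y ∈ O ↔ H.IsOuter M y := fun y => by simp [O]
  have hO : ∀ y ∈ O, ∀ z ∈ O, ¬H.Adj y z := fun y hy z hz =>
    hM.not_adj_of_isOuter hH hδ hcard hU ((hmemO y).mp hy) ((hmemO z).mp hz)
  have hexp : ∀ x, IsExposed M x → x ∈ O := fun x hx => (hmemO x).mpr (.inl hx)
  have hmeet : ∀ e ∈ M, (∃ x ∈ e, H.SeesExposed M x) → ∃ y ∈ e, y ∈ O := by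
    rintro e he ⟨x, hxe, hx⟩
    obtain ⟨y, rfl⟩ := Sym2.mem_iff_exists.mp hxe
    exact ⟨y, Sym2.mem_mk_right x y, (hmemO y).mpr (.inr ⟨x, he, hx⟩)⟩
  by_cases hall : ∀ e ∈ M, ∃ y ∈ e, y ∈ O
  · exact ⟨O, fun y hy z hz _ => hO y hy z hz, hM.isEdgeMatching.matchableInto hexp hall⟩
  push Not at hall
  obtain ⟨e₀, he₀, hno⟩ := hall
  induction e₀ using Sym2.ind with | h a b => ?_
  have hunseen : ∀ c ∈ s(a, b), ¬H.SeesExposed M c := fun c hc h => by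
    obtain ⟨y, hy, hyO⟩ := hmeet _ he₀ ⟨c, hc, h⟩
    exact hno y hy hyO
  have ha := hunseen a (Sym2.mem_mk_left a b)
  have hb := hunseen b (Sym2.mem_mk_right a b)
  obtain ⟨c, hc, hcO⟩ := hM.exists_mem_not_adj_isOuter hH hδ hcard hU he₀ ha hb
  refine ⟨insert c O, ?_, hM.isEdgeMatching.matchableInto (fun x hx => mem_insert_of_mem
    (hexp x hx)) fun e he => ?_⟩
  · rw [coe_insert]
    refine Set.Pairwise.insert (fun y hy z hz _ => hO y hy z hz) fun y hy _ => ?_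
    have hy' := hcO y ((hmemO y).mp hy)
    exact ⟨hy', fun h => hy' h.symm⟩
  · obtain rfl | hne := eq_or_ne e s(a, b)
    · exact ⟨c, hc, mem_insert_self c O⟩
    · obtain ⟨y, hye, hy⟩ := hmeet e he (hM.exists_seesExposed_mem_of_ne hH hδ hcard
        (zero_lt_one.trans hU) he₀ ha hb he hne)
      exact ⟨y, hye, mem_insert_of_mem hy⟩

end IsMaximumEdgeMatching

/-- No vertex sees two consecutive vertices of a closed walk `c` of length five, hence at most two
of them, so double counting `∑ i, degree (c i)` gives the bound. -/
theorem CliqueFree.five_mul_le_two_mul_card (hH : H.CliqueFree 3) [Fintype V]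
    [DecidableRel H.Adj] {δ : ℕ} (hδ : ∀ v, δ ≤ H.degree v) (c : Fin 5 → V)
    (hc : ∀ i, H.Adj (c i) (c (i + 1))) : 5 * δ ≤ 2 * Fintype.card V := by
  have hsparse : ∀ A : Finset (Fin 5), (∀ i ∈ A, i + 1 ∉ A) → #A ≤ 2 := by decide
  calc 5 * δ = ∑ i : Fin 5, δ := by simp [mul_comm]
    _ ≤ ∑ i, #(univ.bipartiteAbove (fun i v => H.Adj (c i) v) i) := by
      gcongr with i
      simpa [bipartiteAbove, ← neighborFinset_eq_filter] using hδ (c i)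
    _ = ∑ v, #(univ.bipartiteBelow (fun i v => H.Adj (c i) v) v) :=
      sum_card_bipartiteAbove_eq_sum_card_bipartiteBelow _
    _ ≤ ∑ _v : V, 2 := by
      gcongr with v
      refine hsparse _ fun i hi hi' => ?_
      simp only [bipartiteBelow, mem_filter, mem_univ, true_and] at hi hi'
      exact hH.not_adj_of_adj_of_adj hi.symm hi'.symm (hc i)
    _ = 2 * Fintype.card V := by simp [mul_comm]

/-- With no closed walks of length three or five, the second neighbourhood of a vertex is
independent. For an edge `ab` the second neighbourhoods of `a` and `b` cover all vertices, since
a vertex outside both has a neighbourhood disjoint from `N(a)` and `N(b)`. -/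
theorem CliqueFree.exists_isIndepSet_compl [Fintype V] [DecidableEq V] [DecidableRel H.Adj]
    (hH : H.CliqueFree 3) {δ : ℕ} (hδ : ∀ v, δ ≤ H.degree v)
    (hdense : 2 * Fintype.card V < 5 * δ) :
    ∃ P : Finset V, H.IsIndepSet P ∧ H.IsIndepSet (↑P)ᶜ := by
  have hsecond : ∀ z x y, (∃ q, H.Adj z q ∧ H.Adj x q) → (∃ q, H.Adj z q ∧ H.Adj y q) →
      ¬H.Adj x y := by
    rintro z x y ⟨q, hzq, hxq⟩ ⟨q', hzq', hyq'⟩ hxy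
    refine (hH.five_mul_le_two_mul_card hδ ![x, q, z, q', y] fun i => ?_).not_gt hdense
    fin_cases i
    exacts [hxq, hzq.symm, hzq', hyq'.symm, hxy.symm]
  rcases isEmpty_or_nonempty V with hV | ⟨⟨a⟩⟩
  · exact ⟨∅, by simp, fun x => hV.elim x⟩
  obtain ⟨b, hab⟩ : ∃ b, H.Adj a b := by
    rw [← degree_pos_iff_exists_adj]
    have := hδ a
    omega
  have hcover : ∀ x, (∃ q, H.Adj a q ∧ H.Adj x q) ∨ ∃ q, H.Adj b q ∧ H.Adj x q := by
    intro x
    by_contra! h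
    have hdisj : ∀ {c d}, (∀ q, H.Adj c q → ¬H.Adj d q) →
        Disjoint (H.neighborFinset c) (H.neighborFinset d) := by
      intro c d hcd
      rw [Finset.disjoint_left]
      intro q hc hd
      exact hcd q ((mem_neighborFinset _ _ _).mp hc) ((mem_neighborFinset _ _ _).mp hd)
    have := card_le_univ (H.neighborFinset a ∪ H.neighborFinset b ∪ H.neighborFinset x)
    rw [card_union_of_disjoint (disjoint_union_left.mpr ⟨hdisj h.1, hdisj h.2⟩),
      card_union_of_disjoint (hdisj fun q => hH.not_adj_of_adj_of_adj hab)] at this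
    simp only [card_neighborFinset_eq_degree] at this
    have := hδ a; have := hδ b; have := hδ x
    omega
  refine ⟨({x | ∃ q, H.Adj a q ∧ H.Adj x q} : Finset V), fun x hx y hy _ => hsecond a x y ?_ ?_,
    fun x hx y hy _ => hsecond b x y ((hcover x).resolve_left ?_) ((hcover y).resolve_left ?_)⟩
  exacts [by simpa using hx, by simpa using hy, by simpa using hx, by simpa using hy]

theorem CliqueFree.exists_matchableInto [Fintype V] [DecidableEq V] [DecidableRel H.Adj]
    (hH : H.CliqueFree 3) {δ : ℕ} (hδ : ∀ v, δ ≤ H.degree v) (hn : δ + 10 ≤ Fintype.card V) :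
    ∃ S : Finset V, H.MatchableInto S ∧ (H.IsIndepSet S ∨ #S + δ + 2 ≤ Fintype.card V) := by
  by_cases hdense : Fintype.card V ≤ 2 * δ + 3
  · obtain ⟨P, hP, hPc⟩ := hH.exists_isIndepSet_compl hδ (by omega)
    obtain ⟨S, hS, hSc, hle⟩ : ∃ S : Finset V, H.IsIndepSet S ∧ H.IsIndepSet (↑S)ᶜ ∧
        #Sᶜ ≤ #S := by
      rcases le_total #P #Pᶜ with h | h
      · exact ⟨Pᶜ, by simpa using hPc, by simpa using hP, by simpa using h⟩
      · exact ⟨P, hP, hPc, h⟩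
    have := card_add_card_compl S
    exact ⟨S, matchableInto_of_isIndepSet hδ (by omega) hS hSc hle (by omega), .inl hS⟩
  obtain ⟨M, hM⟩ := H.exists_isMaximumEdgeMatching
  by_cases hbig : δ + 2 ≤ #M
  · obtain ⟨N, hNM, hN⟩ := exists_subset_card_eq hbig
    obtain ⟨S, hS, hSN⟩ := (hM.isEdgeMatching.mono hNM).exists_matchableInto
    exact ⟨S, hSN, .inr (by omega)⟩
  · have := card_le_card_isExposed_add M
    obtain ⟨S, hS, hSM⟩ := hM.exists_isIndepSet_matchableInto hH hδ (by omega) (by omega)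
    exact ⟨S, hSM, .inl hS⟩

theorem colorable_of_indepSetFree_three [Fintype V] [DecidableRel G.Adj]
    (hα : G.IndepSetFree 3) (hΔ : 9 ≤ G.maxDegree) :
    G.Colorable (max (G.maxDegree - 1) G.cliqueNum) := by
  classical
  have : Nonempty V := by
    by_contra! h
    have := G.maxDegree_le_of_forall_degree_le 0 fun v => h.elim v
    omega
  have hΔδ : Fintype.card V - 1 - Gᶜ.minDegree ≤ G.maxDegree := by
    obtain ⟨v, hv⟩ := Gᶜ.exists_minimal_degree_vertex
    have := G.degree_compl v
    have := G.degree_lt_card_verts v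
    have := G.degree_le_maxDegree v
    omega
  have hδn : Gᶜ.minDegree + 10 ≤ Fintype.card V := by
    obtain ⟨w, hw⟩ := G.exists_maximal_degree_vertex
    have := G.degree_compl w
    have := G.degree_lt_card_verts w
    have := Gᶜ.minDegree_le_degree w
    omega
  obtain ⟨S, hS, hSbound⟩ :=
    (cliqueFree_compl (G := G) |>.mpr hα).exists_matchableInto Gᶜ.minDegree_le_degree hδn
  refine (colorable_of_compl_matchableInto hS).mono ?_
  rcases hSbound with hS | hS
  · exact le_max_of_le_right ((isIndepSet_compl G).mp hS).card_le_cliqueNum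
  · exact le_max_of_le_left (by omega)

end SimpleGraph

theorem borodin_kostochka_P3K1_free
    {V : Type*} [Fintype V]
    (G : SimpleGraph V) [DecidableRel G.Adj]
    (hΔ : 9 ≤ G.maxDegree)
    (hfree : ¬ Nonempty (P3UnionK1 ↪g G)) :
    G.chromaticNumber ≤ (↑(max (G.maxDegree - 1) G.cliqueNum) : ℕ∞) := by
  refine Colorable.chromaticNumber_le ?_
  by_cases hα : G.IndepSetFree 3
  · exact colorable_of_indepSetFree_three hα hΔ
  · obtain ⟨T, hT⟩ : ∃ T, G.IsNIndepSet 3 T := by simpa [IndepSetFree] using hα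
    exact colorable_of_isNIndepSet hfree hT
end

section
/- Let G be a finite simple graph with maximum degree Δ(G) ≥ 9 that is 3K1-free, i.e., G contains no independent set of size 3 (no induced subgraph isomorphic to three isolated vertices). Then χ(G) ≤ max{Δ(G) − 1, ω(G)}. -/
/-!
An independent set of a `3K₁`-free graph `G` has at most two vertices, so a colouring of `G`
is a matching `P` of the triangle-free complement `H = Gᶜ`, using `n - |P|` colours, while cliques
of `G` are independent sets of `H`. Every degree of `H` is at least `δ = n - 1 - Δ(G)`, and
`Δ(G) ≥ 9` gives `n ≥ δ + 10`. It suffices to show that a maximum matching `P` of `H` has at least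
`δ + 2` edges, or that `H` has an independent set of size `n - |P|`.

If two vertices are left unmatched, then every unmatched vertex, having all its `≥ |P| - 1`
neighbours in distinct edges of `P`, misses at most one edge. Augmenting-path arguments then allow
to orient every edge of `P` so that its second ends are adjacent neither to unmatched vertices nor
to each other; together with the unmatched vertices they form the independent set. If at most one
vertex is unmatched, then `n ≤ 2|P| + 1` and all degrees are at least `|P| - 1 ≥ 7`. Counting
neighbourhoods around a vertex `x` of maximum degree, using that adjacent vertices of `H` have
disjoint neighbourhoods, the independent set is `N(x)` with one non-neighbour of `x`, or `x` with
all its non-neighbours, or, when `H` is regular on `2|P| + 1` vertices, a neighbourhood with two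
more vertices.
-/

open Finset

namespace SimpleGraph

variable {V : Type*}

/-- Matchings are multisets of ordered pairs, one per edge; the order singles out a second end of
every edge. `pairVerts P` is the multiset of their endpoints. -/
def pairVerts (P : Multiset (V × V)) : Multiset V := P.bind fun p => {p.1, p.2}

def IsPairMatching (H : SimpleGraph V) (P : Multiset (V × V)) : Prop :=
  (∀ p ∈ P, H.Adj p.1 p.2) ∧ (pairVerts P).Nodup

def IsMaxPairMatching (H : SimpleGraph V) (P : Multiset (V × V)) : Prop :=
  H.IsPairMatching P ∧ ∀ Q, H.IsPairMatching Q → Multiset.card Q ≤ Multiset.card P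

variable {H : SimpleGraph V} {P Q R : Multiset (V × V)} {p q e f g : V × V}
  {a b c u v w x y z : V}

@[simp]
lemma mem_pairVerts : v ∈ pairVerts P ↔ ∃ p ∈ P, v = p.1 ∨ v = p.2 := by
  simp only [pairVerts, Multiset.mem_bind, Multiset.insert_eq_cons, Multiset.mem_cons,
    Multiset.mem_singleton]

lemma pairVerts_add : pairVerts (P + Q) = pairVerts P + pairVerts Q :=
  Multiset.add_bind ..

@[simp]
lemma card_pairVerts : Multiset.card (pairVerts P) = 2 * Multiset.card P := by
  simp [pairVerts, two_mul]

lemma pairVerts_mono (h : R ≤ P) : pairVerts R ≤ pairVerts P := by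
  obtain ⟨S, rfl⟩ := Multiset.le_iff_exists_add.1 h
  exact pairVerts_add ▸ Multiset.le_add_right _ _

lemma IsPairMatching.mono (hP : H.IsPairMatching P) (h : R ≤ P) : H.IsPairMatching R :=
  ⟨fun p hp => hP.1 p (Multiset.mem_of_le h hp), Multiset.nodup_of_le (pairVerts_mono h) hP.2⟩

lemma IsPairMatching.nodup (hP : H.IsPairMatching P) : P.Nodup := by
  refine Multiset.nodup_iff_le.2 fun p hp => ?_
  have := Multiset.nodup_of_le (pairVerts_mono hp) hP.2
  simp [pairVerts] at this

lemma IsPairMatching.eq_of_mem (hP : H.IsPairMatching P) (hp : p ∈ P) (hq : q ∈ P)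
    (hvp : v = p.1 ∨ v = p.2) (hvq : v = q.1 ∨ v = q.2) : p = q := by
  by_contra hpq
  have := (hP.mono ((Multiset.cons_le_of_notMem (by simpa using hpq)).2
    ⟨hp, Multiset.singleton_le.2 hq⟩)).2
  simp [pairVerts] at this
  grind

theorem exists_isMaxPairMatching [Fintype V] (H : SimpleGraph V) :
    ∃ P, H.IsMaxPairMatching P := by
  classical
  have hbound : ∀ P, H.IsPairMatching P → Multiset.card P ≤ Fintype.card V := fun P hP => by
    have h := Multiset.toFinset_card_of_nodup hP.2
    have := card_le_univ (pairVerts P).toFinset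
    simp only [card_pairVerts] at h
    omega
  obtain ⟨P, hP, hPm⟩ := Nat.findGreatest_spec
    (P := fun k => ∃ P, H.IsPairMatching P ∧ Multiset.card P = k) (Nat.zero_le _)
    ⟨0, ⟨by simp, by simp [pairVerts]⟩, rfl⟩
  exact ⟨P, hP, fun Q hQ => hPm ▸ Nat.le_findGreatest (hbound Q hQ) ⟨Q, hQ, rfl⟩⟩

/-- Augmenting paths: the edges `Q` cannot replace the edges `R` of a maximum matching while
covering in addition two unmatched vertices. -/
theorem IsMaxPairMatching.not_augment [DecidableEq V] (hP : H.IsMaxPairMatching P)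
    (hR : R ≤ P) (hQ : ∀ q ∈ Q, H.Adj q.1 q.2) (hcard : Multiset.card Q = Multiset.card R + 1)
    (ha : a ∉ pairVerts P) (hb : b ∉ pairVerts P) (hab : a ≠ b)
    (hQR : ∀ v, v ∈ pairVerts Q ↔ v ∈ pairVerts R ∨ v = a ∨ v = b) : False := by
  obtain ⟨S, rfl⟩ := Multiset.le_iff_exists_add.1 hR
  obtain ⟨hRn, hSn, hRS⟩ := Multiset.nodup_add.1 (pairVerts_add (P := R) ▸ hP.1.2)
  rw [pairVerts_add, Multiset.mem_add, not_or] at ha hb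
  -- `pairVerts Q` has no repetitions, as its support has as many elements as it does
  have hQn : (pairVerts Q).Nodup := by
    have hsupp : (pairVerts Q).toFinset = insert a (insert b (pairVerts R).toFinset) := by
      ext v
      simp only [Multiset.mem_toFinset, hQR, mem_insert]
      tauto
    rw [← Multiset.toFinset_card_eq_card_iff_nodup, hsupp,
      card_insert_of_notMem (by simp [hab, ha.1]), card_insert_of_notMem (by simp [hb.1]),
      Multiset.toFinset_card_of_nodup hRn, card_pairVerts, card_pairVerts, hcard]
    ring
  have hQS : H.IsPairMatching (Q + S) := by
    refine ⟨fun p hp => (Multiset.mem_add.1 hp).elim (hQ p)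
      (hP.1.1 p ∘ Multiset.mem_add.2 ∘ .inr), pairVerts_add ▸ Multiset.nodup_add.2
      ⟨hQn, hSn, Multiset.disjoint_left.2 fun {v} hvQ hvS => ?_⟩⟩
    rcases (hQR v).1 hvQ with hvR | rfl | rfl
    · exact Multiset.disjoint_left.1 hRS hvR hvS
    · exact ha.2 hvS
    · exact hb.2 hvS
  have := hP.2 _ hQS
  simp only [Multiset.card_add] at this
  omega

lemma IsMaxPairMatching.map_of_forall_eq_or_eq_swap (hP : H.IsMaxPairMatching P)
    {σ : V × V → V × V} (hσ : ∀ p, σ p = p ∨ σ p = p.swap) :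
    H.IsMaxPairMatching (P.map σ) ∧ pairVerts (P.map σ) = pairVerts P := by
  have hv : pairVerts (P.map σ) = pairVerts P := by
    simp only [pairVerts, Multiset.bind_map]
    refine Multiset.bind_congr fun p _ => ?_
    rcases hσ p with h | h <;> rw [h]
    exact Multiset.pair_comm _ _
  refine ⟨⟨⟨fun p' hp' => ?_, hv ▸ hP.1.2⟩, fun Q hQ => by simpa using hP.2 Q hQ⟩, hv⟩
  obtain ⟨p, hp, rfl⟩ := Multiset.mem_map.1 hp'
  rcases hσ p with h | h <;> rw [h]
  exacts [hP.1.1 p hp, (hP.1.1 p hp).symm]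

lemma IsMaxPairMatching.not_adj_of_notMem [DecidableEq V] (hP : H.IsMaxPairMatching P)
    (ha : a ∉ pairVerts P) (hb : b ∉ pairVerts P) : ¬ H.Adj a b := fun hab =>
  hP.not_augment (R := 0) (Q := {(a, b)}) (Multiset.zero_le P) (by simpa using hab) rfl ha hb
    hab.ne (by simp)

lemma IsPairMatching.card_toFinset_map_snd [DecidableEq V] (hP : H.IsPairMatching P) :
    #(P.map Prod.snd).toFinset = Multiset.card P := by
  rw [Multiset.toFinset_card_of_nodup (hP.nodup.map_on fun e he f hf hef =>
    hP.eq_of_mem he hf (.inr rfl) (.inr hef)), Multiset.card_map]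

section Counting

variable [Fintype V] [DecidableEq V]

lemma IsPairMatching.card_filter_notMem_add (hP : H.IsPairMatching P) :
    #(univ.filter (· ∉ pairVerts P)) + 2 * Multiset.card P = Fintype.card V := by
  rw [← card_pairVerts, ← Multiset.toFinset_card_of_nodup hP.2, ← card_univ,
    ← card_filter_add_card_filter_not (s := univ) (fun v => v ∉ pairVerts P)]
  congr 2
  ext v
  simp only [Multiset.mem_toFinset, mem_filter, mem_univ, true_and, not_not]

theorem IsPairMatching.colorable_of_compl {G : SimpleGraph V} (hP : Gᶜ.IsPairMatching P) :
    G.Colorable (Fintype.card V - Multiset.card P) := by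
  classical
  set S := (P.map Prod.snd).toFinset
  let col : V → V := fun v => if h : ∃ p ∈ P, p.2 = v then h.choose.1 else v
  have hcol : ∀ v, col v ∉ S := by
    intro v hv
    obtain ⟨q, hq, hqv⟩ := Multiset.mem_map.1 (Multiset.mem_toFinset.1 hv)
    by_cases h : ∃ p ∈ P, p.2 = v
    · simp only [col, dif_pos h] at hqv
      obtain rfl := hP.eq_of_mem h.choose_spec.1 hq (.inl rfl) (.inr hqv.symm)
      exact (hP.1 _ h.choose_spec.1).ne hqv.symm
    · simp only [col, dif_neg h] at hqv
      exact h ⟨q, hq, hqv⟩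
  have hvalid : ∀ {v w}, G.Adj v w → col v ≠ col w := by
    intro v w hvw hc
    by_cases hv : ∃ p ∈ P, p.2 = v <;> by_cases hw : ∃ p ∈ P, p.2 = w <;>
      simp only [col, hv, hw, dif_pos, dif_neg, not_false_eq_true] at hc
    · have hpq := hP.eq_of_mem hv.choose_spec.1 hw.choose_spec.1 (.inl rfl) (.inl hc)
      exact hvw.ne (by rw [← hv.choose_spec.2, ← hw.choose_spec.2, hpq])
    · have := hP.1 _ hv.choose_spec.1
      rw [hc, hv.choose_spec.2, compl_adj] at this
      exact this.2 hvw.symm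
    · have := hP.1 _ hw.choose_spec.1
      rw [← hc, hw.choose_spec.2, compl_adj] at this
      exact this.2 hvw
    · exact hvw.ne hc
  have := (Coloring.mk (fun v => (⟨col v, mem_sdiff.2 ⟨mem_univ _, hcol v⟩⟩ : ↥(univ \ S)))
    fun hvw h => hvalid hvw (congrArg Subtype.val h)).colorable
  rwa [Fintype.card_coe, card_sdiff_of_subset (subset_univ _), card_univ,
    hP.card_toFinset_map_snd] at this

end Counting

lemma CliqueFree.not_adj_of_adj_of_adj_s8 [DecidableEq V] (hH : H.CliqueFree 3)
    (huv : H.Adj u v) (hvw : H.Adj v w) : ¬ H.Adj u w := fun huw =>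
  hH {u, v, w} (is3Clique_triple_iff.2 ⟨huv, huw, hvw⟩)

lemma IsIndepSet.insert {s : Set V} (hs : H.IsIndepSet s) (h : ∀ b ∈ s, ¬ H.Adj a b) :
    H.IsIndepSet (insert a s) :=
  Set.Pairwise.insert hs fun b hb _ => ⟨h b hb, fun hba => h b hb hba.symm⟩

section TwoUnmatched

lemma exists_ne_adj_fst_of_adj_fst
    (hmiss : ∀ u ∉ pairVerts P, ∀ e ∈ P, ∀ f ∈ P, e ≠ f → H.Adj u e.1 ∨ H.Adj u f.1)
    (ha : a ∉ pairVerts P) (hb : b ∉ pairVerts P) (hab : a ≠ b) (he : e ∈ P) (hf : f ∈ P)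
    (hef : e ≠ f) (he₁ : ∃ u ∉ pairVerts P, H.Adj u e.1) (hf₁ : ∃ w ∉ pairVerts P, H.Adj w f.1) :
    ∃ u ∉ pairVerts P, ∃ w ∉ pairVerts P, u ≠ w ∧ H.Adj u e.1 ∧ H.Adj w f.1 := by
  obtain ⟨u, hu, hue⟩ := he₁
  obtain ⟨w, hw, hwf⟩ := hf₁
  obtain huw | rfl := ne_or_eq u w
  · exact ⟨u, hu, w, hw, huw, hue, hwf⟩
  -- a second unmatched vertex `x` sees `e` or `f`, and replaces `u` at that end
  obtain ⟨x, hx, hxu⟩ : ∃ x ∉ pairVerts P, x ≠ u := by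
    obtain rfl | hau := eq_or_ne a u
    exacts [⟨b, hb, hab.symm⟩, ⟨a, ha, hau⟩]
  rcases hmiss x hx e he f hf hef with hxe | hxf
  exacts [⟨x, hx, u, hu, hxu, hxe, hwf⟩, ⟨u, hu, x, hx, hxu.symm, hue, hxf⟩]

variable [DecidableEq V]

lemma IsMaxPairMatching.not_adj_snd_of_adj_fst (hH : H.CliqueFree 3)
    (hP : H.IsMaxPairMatching P) (he : e ∈ P) (hu : u ∉ pairVerts P) (hw : w ∉ pairVerts P)
    (hue : H.Adj u e.1) : ¬ H.Adj w e.2 := by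
  intro hwe
  obtain rfl | huw := eq_or_ne u w
  · exact hH.not_adj_of_adj_of_adj_s8 hue (hP.1.1 e he) hwe
  refine hP.not_augment (R := {e}) (Q := {(u, e.1), (e.2, w)}) (Multiset.singleton_le.2 he)
    (by simp [hue, hwe.symm]) rfl hu hw huw fun v => ?_
  simp [pairVerts]
  tauto

lemma IsMaxPairMatching.not_adj_snd_snd (hP : H.IsMaxPairMatching P)
    (hmiss : ∀ u ∉ pairVerts P, ∀ e ∈ P, ∀ f ∈ P, e ≠ f → H.Adj u e.1 ∨ H.Adj u f.1)
    (ha : a ∉ pairVerts P) (hb : b ∉ pairVerts P) (hab : a ≠ b) (he : e ∈ P) (hf : f ∈ P)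
    (he₁ : ∃ u ∉ pairVerts P, H.Adj u e.1) (hf₁ : ∃ w ∉ pairVerts P, H.Adj w f.1) :
    ¬ H.Adj e.2 f.2 := by
  intro hef₂
  obtain rfl | hef := eq_or_ne e f
  · exact H.irrefl hef₂
  obtain ⟨u, hu, w, hw, huw, hue, hwf⟩ :=
    exists_ne_adj_fst_of_adj_fst hmiss ha hb hab he hf hef he₁ hf₁
  refine hP.not_augment (R := {e, f}) (Q := {(u, e.1), (e.2, f.2), (f.1, w)})
    ((Multiset.cons_le_of_notMem (by simpa using hef)).2 ⟨he, Multiset.singleton_le.2 hf⟩)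
    (by simp [hue, hef₂, hwf.symm]) rfl hu hw huw fun v => ?_
  simp [pairVerts]
  tauto

lemma IsMaxPairMatching.not_adj_fst_snd_of_adj_snd_snd (hH : H.CliqueFree 3)
    (hP : H.IsMaxPairMatching P)
    (hmiss : ∀ u ∉ pairVerts P, ∀ e ∈ P, ∀ f ∈ P, e ≠ f → H.Adj u e.1 ∨ H.Adj u f.1)
    (ha : a ∉ pairVerts P) (hb : b ∉ pairVerts P) (hab : a ≠ b)
    (he : e ∈ P) (he₁ : ∀ u ∉ pairVerts P, ¬ H.Adj u e.1)
    (hf : f ∈ P) (hf₁ : ∃ u ∉ pairVerts P, H.Adj u f.1)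
    (hg : g ∈ P) (hg₁ : ∃ w ∉ pairVerts P, H.Adj w g.1) (heg : H.Adj e.2 g.2) :
    ¬ H.Adj e.1 f.2 := by
  intro hef
  obtain rfl | hfg := eq_or_ne f g
  · exact hH.not_adj_of_adj_of_adj_s8 (hP.1.1 e he) heg hef
  obtain ⟨u, hu, w, hw, huw, huf, hwg⟩ :=
    exists_ne_adj_fst_of_adj_fst hmiss ha hb hab hf hg hfg hf₁ hg₁
  have hfe : f ≠ e := by rintro rfl; exact he₁ u hu huf
  have hge : g ≠ e := by rintro rfl; exact he₁ w hw hwg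
  refine hP.not_augment (R := {f, e, g}) (Q := {(u, f.1), (f.2, e.1), (e.2, g.2), (g.1, w)})
    ((Multiset.cons_le_of_notMem (by simp [hfe, hfg])).2 ⟨hf,
      (Multiset.cons_le_of_notMem (by simpa using hge.symm)).2 ⟨he, Multiset.singleton_le.2 hg⟩⟩)
    (by simp [huf, hef.symm, heg, hwg.symm]) rfl hu hw huw fun v => ?_
  simp [pairVerts]
  tauto

lemma IsMaxPairMatching.exists_forall_not_adj_snd (hH : H.CliqueFree 3)
    (hP : H.IsMaxPairMatching P) :
    ∃ P', H.IsMaxPairMatching P' ∧ pairVerts P' = pairVerts P ∧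
      ∀ e ∈ P', ∀ u ∉ pairVerts P, ¬ H.Adj u e.2 := by
  classical
  set σ : V × V → V × V := fun e => if ∃ u ∉ pairVerts P, H.Adj u e.2 then e.swap else e
  obtain ⟨hσP, hσv⟩ := hP.map_of_forall_eq_or_eq_swap (σ := σ) fun e => by
    by_cases h : ∃ u ∉ pairVerts P, H.Adj u e.2
    exacts [.inr (if_pos h), .inl (if_neg h)]
  refine ⟨P.map σ, hσP, hσv, fun e' he' u hu hue' => ?_⟩
  obtain ⟨e, he, rfl⟩ := Multiset.mem_map.1 he'
  by_cases h : ∃ u ∉ pairVerts P, H.Adj u e.2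
  · obtain ⟨w, hw, hwe⟩ := h
    rw [show σ e = e.swap from if_pos ⟨w, hw, hwe⟩, Prod.snd_swap] at hue'
    exact hP.not_adj_snd_of_adj_fst hH he hu hw hue' hwe
  · rw [show σ e = e from if_neg h] at hue'
    exact h ⟨u, hu, hue'⟩

lemma IsMaxPairMatching.degree_le_card_filter [Fintype V] [DecidableRel H.Adj]
    (hP : H.IsMaxPairMatching P) (hsnd : ∀ e ∈ P, ∀ u ∉ pairVerts P, ¬ H.Adj u e.2)
    (hu : u ∉ pairVerts P) : H.degree u ≤ Multiset.card (P.filter fun e => H.Adj u e.1) := by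
  have hsub : H.neighborFinset u ⊆ ((P.filter fun e => H.Adj u e.1).map Prod.fst).toFinset := by
    intro w hw
    rw [mem_neighborFinset] at hw
    have hwP : w ∈ pairVerts P := by
      by_contra hwP
      exact hP.not_adj_of_notMem hu hwP hw
    obtain ⟨e, he, rfl | rfl⟩ := mem_pairVerts.1 hwP
    · exact Multiset.mem_toFinset.2 (Multiset.mem_map.2 ⟨e, Multiset.mem_filter.2 ⟨he, hw⟩, rfl⟩)
    · exact absurd hw (hsnd e he u hu)
  calc H.degree u ≤ #((P.filter fun e => H.Adj u e.1).map Prod.fst).toFinset :=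
        card_neighborFinset_eq_degree H u ▸ card_le_card hsub
    _ ≤ _ := (Multiset.toFinset_card_le _).trans (Multiset.card_map _ _).le

lemma IsMaxPairMatching.adj_fst_or_adj_fst [Fintype V] [DecidableRel H.Adj] {δ : ℕ}
    (hP : H.IsMaxPairMatching P) (hsnd : ∀ e ∈ P, ∀ u ∉ pairVerts P, ¬ H.Adj u e.2)
    (hδ : ∀ v, δ ≤ H.degree v) (hcard : Multiset.card P ≤ δ + 1) :
    ∀ u ∉ pairVerts P, ∀ e ∈ P, ∀ f ∈ P, e ≠ f → H.Adj u e.1 ∨ H.Adj u f.1 := by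
  intro u hu e he f hf hef
  by_contra! h
  have hle : {e, f} ≤ P.filter fun e => ¬ H.Adj u e.1 :=
    (Multiset.cons_le_of_notMem (by simpa using hef)).2 ⟨Multiset.mem_filter.2 ⟨he, h.1⟩,
      Multiset.singleton_le.2 (Multiset.mem_filter.2 ⟨hf, h.2⟩)⟩
  have hsplit := congrArg Multiset.card (Multiset.filter_add_not (fun e => H.Adj u e.1) P)
  have h2 := Multiset.card_le_card hle
  rw [Multiset.card_add] at hsplit
  rw [Multiset.insert_eq_cons, Multiset.card_cons, Multiset.card_singleton] at h2
  have := hP.degree_le_card_filter hsnd hu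
  have := hδ u
  omega

lemma IsMaxPairMatching.exists_forall_not_adj_snd_snd (hH : H.CliqueFree 3)
    (hP : H.IsMaxPairMatching P) (hsnd : ∀ e ∈ P, ∀ u ∉ pairVerts P, ¬ H.Adj u e.2)
    (hmiss : ∀ u ∉ pairVerts P, ∀ e ∈ P, ∀ f ∈ P, e ≠ f → H.Adj u e.1 ∨ H.Adj u f.1)
    (ha : a ∉ pairVerts P) (hb : b ∉ pairVerts P) (hab : a ≠ b) :
    ∃ P', H.IsMaxPairMatching P' ∧ pairVerts P' = pairVerts P ∧
      (∀ e ∈ P', ∀ u ∉ pairVerts P, ¬ H.Adj u e.2) ∧ ∀ e ∈ P', ∀ f ∈ P', ¬ H.Adj e.2 f.2 := by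
  classical
  set Live : V × V → Prop := fun e => ∃ u ∉ pairVerts P, H.Adj u e.1
  -- at most one pair of `P` is not `Live`; it is reversed if its second end is adjacent to the
  -- second end of a `Live` pair
  set σ : V × V → V × V := fun e =>
    if ¬ Live e ∧ ∃ g ∈ P, Live g ∧ H.Adj e.2 g.2 then e.swap else e
  obtain ⟨hσP, hσv⟩ := hP.map_of_forall_eq_or_eq_swap (σ := σ) fun e => by
    by_cases h : ¬ Live e ∧ ∃ g ∈ P, Live g ∧ H.Adj e.2 g.2
    exacts [.inr (if_pos h), .inl (if_neg h)]
  have hlive : ∀ e, Live e → σ e = e := fun e he => if_neg fun h => h.1 he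
  have hdead : ∀ e ∈ P, ¬ Live e → ∀ g ∈ P, Live g → ¬ H.Adj (σ e).2 g.2 := by
    intro e he hle g hg hlg
    by_cases h : ¬ Live e ∧ ∃ g ∈ P, Live g ∧ H.Adj e.2 g.2
    · obtain ⟨-, g', hg', hlg', heg'⟩ := h
      rw [show σ e = e.swap from if_pos ⟨hle, g', hg', hlg', heg'⟩, Prod.snd_swap]
      exact hP.not_adj_fst_snd_of_adj_snd_snd hH hmiss ha hb hab he
        (fun u hu hue => hle ⟨u, hu, hue⟩) hg hlg hg' hlg' heg'
    · rw [show σ e = e from if_neg h]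
      exact fun heg => h ⟨hle, g, hg, hlg, heg⟩
  refine ⟨P.map σ, hσP, hσv, fun e' he' u hu hue' => ?_, fun e' he' f' hf' => ?_⟩
  · obtain ⟨e, he, rfl⟩ := Multiset.mem_map.1 he'
    by_cases h : ¬ Live e ∧ ∃ g ∈ P, Live g ∧ H.Adj e.2 g.2
    · rw [show σ e = e.swap from if_pos h, Prod.snd_swap] at hue'
      exact h.1 ⟨u, hu, hue'⟩
    · rw [show σ e = e from if_neg h] at hue'
      exact hsnd e he u hu hue'
  obtain ⟨e, he, rfl⟩ := Multiset.mem_map.1 he'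
  obtain ⟨f, hf, rfl⟩ := Multiset.mem_map.1 hf'
  by_cases hle : Live e <;> by_cases hlf : Live f
  · rw [hlive e hle, hlive f hlf]
    exact hP.not_adj_snd_snd hmiss ha hb hab he hf hle hlf
  · rw [hlive e hle]
    exact fun hef => hdead f hf hlf e he hle hef.symm
  · rw [hlive f hlf]
    exact hdead e he hle f hf hlf
  · obtain rfl : e = f := by
      by_contra hef
      rcases hmiss a ha e he f hf hef with h | h
      exacts [hle ⟨a, ha, h⟩, hlf ⟨a, ha, h⟩]
    exact H.irrefl

theorem IsMaxPairMatching.exists_isIndepSet_of_forall_not_adj_snd [Fintype V]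
    [DecidableRel H.Adj] (hP : H.IsMaxPairMatching P)
    (hsnd : ∀ e ∈ P, ∀ u ∉ pairVerts P, ¬ H.Adj u e.2)
    (hsnd' : ∀ e ∈ P, ∀ f ∈ P, ¬ H.Adj e.2 f.2) :
    ∃ s : Finset V, H.IsIndepSet ↑s ∧ Fintype.card V ≤ Multiset.card P + #s := by
  set U := univ.filter (· ∉ pairVerts P)
  set S := (P.map Prod.snd).toFinset
  refine ⟨U ∪ S, ?_, ?_⟩
  · intro x hx y hy _
    simp only [coe_union, Set.mem_union, mem_coe, mem_filter, U, S, Multiset.mem_toFinset,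
      Multiset.mem_map] at hx hy
    rcases hx with ⟨-, hx⟩ | ⟨e, he, rfl⟩ <;> rcases hy with ⟨-, hy⟩ | ⟨f, hf, rfl⟩
    · exact hP.not_adj_of_notMem hx hy
    · exact hsnd f hf x hx
    · exact fun h => hsnd e he y hy h.symm
    · exact hsnd' e he f hf
  have hUS : Disjoint U S := Finset.disjoint_left.2 fun v hvU hvS => by
    obtain ⟨e, he, rfl⟩ := Multiset.mem_map.1 (Multiset.mem_toFinset.1 hvS)
    exact (mem_filter.1 hvU).2 (mem_pairVerts.2 ⟨e, he, .inr rfl⟩)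
  have hU : #U + 2 * Multiset.card P = Fintype.card V := hP.1.card_filter_notMem_add
  rw [card_union_of_disjoint hUS, hP.1.card_toFinset_map_snd]
  omega

theorem IsMaxPairMatching.exists_isIndepSet_of_two_notMem [Fintype V] [DecidableRel H.Adj]
    {δ : ℕ} (hH : H.CliqueFree 3) (hP : H.IsMaxPairMatching P) (hδ : ∀ v, δ ≤ H.degree v)
    (hcard : Multiset.card P ≤ δ + 1) (ha : a ∉ pairVerts P) (hb : b ∉ pairVerts P)
    (hab : a ≠ b) :
    ∃ s : Finset V, H.IsIndepSet ↑s ∧ Fintype.card V ≤ Multiset.card P + #s := by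
  obtain ⟨P₁, hP₁, hv₁, hsnd₁⟩ := hP.exists_forall_not_adj_snd hH
  rw [← hv₁] at ha hb hsnd₁
  have hcard₁ : Multiset.card P₁ = Multiset.card P := by
    simpa using congrArg Multiset.card hv₁
  obtain ⟨P₂, hP₂, hv₂, hsnd₂, hsnd₂'⟩ := hP₁.exists_forall_not_adj_snd_snd hH hsnd₁
    (hP₁.adj_fst_or_adj_fst hsnd₁ hδ (hcard₁ ▸ hcard)) ha hb hab
  rw [← hv₂] at hsnd₂
  have hcard₂ : Multiset.card P₂ = Multiset.card P₁ := by
    simpa using congrArg Multiset.card hv₂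
  rw [← hcard₁, ← hcard₂]
  exact hP₂.exists_isIndepSet_of_forall_not_adj_snd hsnd₂ hsnd₂'

end TwoUnmatched

lemma CliqueFree.isIndepSet_neighborFinset [Fintype V] [DecidableRel H.Adj]
    (hH : H.CliqueFree 3) (x : V) : H.IsIndepSet ↑(H.neighborFinset x) := by
  simpa using isIndepSet_neighborSet_of_triangleFree H hH x

section FewUnmatched

variable [Fintype V] [DecidableEq V] [DecidableRel H.Adj]

lemma CliqueFree.degree_add_card_inter_le (hH : H.CliqueFree 3) (hyz : H.Adj y z)
    {T : Finset V} (hT : H.neighborFinset y ⊆ T) :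
    H.degree y + #(H.neighborFinset z ∩ T) ≤ #T := by
  have hdisj : Disjoint (H.neighborFinset y) (H.neighborFinset z ∩ T) :=
    Finset.disjoint_left.2 fun w hwy hwz => hH.not_adj_of_adj_of_adj_s8 hyz
      ((H.mem_neighborFinset _ _).1 (mem_inter.1 hwz).1) ((H.mem_neighborFinset _ _).1 hwy)
  rw [← card_neighborFinset_eq_degree, ← card_union_of_disjoint hdisj]
  exact card_le_card (union_subset hT inter_subset_right)

lemma CliqueFree.card_neighborFinset_inter_le_two (hH : H.CliqueFree 3) {d : ℕ}
    (hreg : H.IsRegularOfDegree d)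
    (hcover : ∀ w, w ∈ H.neighborFinset x ∨ w ∈ H.neighborFinset z ∨ w = x ∨ w = z ∨ w = c)
    (hxz : Disjoint (H.neighborFinset x) (H.neighborFinset z)) (hxy : H.Adj x y)
    (hcy : H.Adj c y) : #(H.neighborFinset c ∩ H.neighborFinset z) ≤ 2 := by
  have hsub : H.neighborFinset y ⊆ insert x (insert c (H.neighborFinset z)) := by
    intro w hw
    rw [mem_neighborFinset] at hw
    simp only [mem_insert]
    rcases hcover w with hwx | hwz | rfl | rfl | rfl
    · exact absurd hw (hH.isIndepSet_neighborFinset x (H.mem_neighborFinset _ _ |>.2 hxy) hwx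
        (H.ne_of_adj hw))
    · exact .inr (.inr hwz)
    · exact .inl rfl
    · exact absurd ((H.mem_neighborFinset _ _).2 hw.symm)
        (Finset.disjoint_left.1 hxz ((H.mem_neighborFinset _ _).2 hxy))
    · exact .inr (.inl rfl)
  have h := hH.degree_add_card_inter_le hcy.symm hsub
  have hZT : H.neighborFinset c ∩ H.neighborFinset z ⊆
      H.neighborFinset c ∩ insert x (insert c (H.neighborFinset z)) :=
    inter_subset_inter_left ((subset_insert c _).trans (subset_insert x _))
  have := card_le_card hZT
  have := (card_insert_le x (insert c (H.neighborFinset z))).trans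
    (Nat.succ_le_succ (card_insert_le c (H.neighborFinset z)))
  rw [card_neighborFinset_eq_degree, hreg.degree_eq] at this
  rw [hreg.degree_eq] at h
  omega

lemma CliqueFree.exists_isIndepSet_insert_insert (hH : H.CliqueFree 3) {d : ℕ}
    (hreg : H.IsRegularOfDegree d) (hxz : ¬ H.Adj x z)
    (hdisj : Disjoint (H.neighborFinset x) (H.neighborFinset z)) (hzc : z ≠ c)
    (hxc : ¬ H.Adj x c) (hzc' : ¬ H.Adj z c) (hc : ∀ a ∈ H.neighborFinset x, ¬ H.Adj c a) :
    ∃ s : Finset V, H.IsIndepSet ↑s ∧ d + 2 ≤ #s := by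
  refine ⟨insert z (insert c (H.neighborFinset x)), ?_, ?_⟩
  · rw [coe_insert, coe_insert]
    refine ((hH.isIndepSet_neighborFinset x).insert hc).insert ?_
    rintro w (rfl | hw)
    · exact hzc'
    · exact fun hzw => Finset.disjoint_left.1 hdisj hw ((H.mem_neighborFinset _ _).2 hzw)
  · rw [card_insert_of_notMem (by simp [hzc, hxz]),
      card_insert_of_notMem (by simpa using hxc), card_neighborFinset_eq_degree, hreg.degree_eq]

lemma IsRegularOfDegree.exists_forall_mem_neighborFinset_or_eq {d : ℕ}
    (hreg : H.IsRegularOfDegree d) (hn : Fintype.card V = 2 * d + 3) (hxz : x ≠ z)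
    (hadj : ¬ H.Adj x z) (hdisj : Disjoint (H.neighborFinset x) (H.neighborFinset z)) :
    ∃ c, c ≠ x ∧ c ≠ z ∧ ¬ H.Adj x c ∧ ¬ H.Adj z c ∧
      ∀ w, w ∈ H.neighborFinset x ∨ w ∈ H.neighborFinset z ∨ w = x ∨ w = z ∨ w = c := by
  set B := univ \ (H.neighborFinset x ∪ H.neighborFinset z)
  have hB : #B = 3 := by
    rw [card_sdiff_of_subset (subset_univ _), card_univ, card_union_of_disjoint hdisj,
      card_neighborFinset_eq_degree, card_neighborFinset_eq_degree, hreg.degree_eq,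
      hreg.degree_eq, hn]
    omega
  have hxB : x ∈ B := by simp [B, adj_comm, hadj]
  have hzB : z ∈ B := by simp [B, hadj]
  obtain ⟨c, hc, hcz⟩ :=
    exists_mem_ne (s := B.erase x) (by rw [card_erase_of_mem hxB, hB]; omega) z
  obtain ⟨hcx, hcB⟩ := mem_erase.1 hc
  have hBeq : {x, z, c} = B := eq_of_subset_of_card_le
    (by simp [insert_subset_iff, hxB, hzB, hcB])
    (by rw [hB, card_insert_of_notMem (by simp [hxz, hcx.symm]), card_pair hcz.symm])
  have hcxz : ¬ H.Adj x c ∧ ¬ H.Adj z c := by simpa [B] using hcB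
  refine ⟨c, hcx, hcz, hcxz.1, hcxz.2, fun w => ?_⟩
  by_contra! h
  have hw : w ∈ B := by simp [B, h.1, h.2.1]
  simp [← hBeq, h.2.2.1, h.2.2.2.1, h.2.2.2.2] at hw

theorem CliqueFree.exists_isIndepSet_of_isRegularOfDegree (hH : H.CliqueFree 3) {d : ℕ}
    (hd : 5 ≤ d) (hreg : H.IsRegularOfDegree d) (hn : Fintype.card V = 2 * d + 3)
    (hxz : x ≠ z) (hadj : ¬ H.Adj x z)
    (hdisj : Disjoint (H.neighborFinset x) (H.neighborFinset z)) :
    ∃ s : Finset V, H.IsIndepSet ↑s ∧ d + 2 ≤ #s := by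
  obtain ⟨c, hcx, hcz, hxc, hzc, hcover⟩ :=
    hreg.exists_forall_mem_neighborFinset_or_eq hn hxz hadj hdisj
  by_cases hA : ∀ a ∈ H.neighborFinset x, ¬ H.Adj c a
  · exact hH.exists_isIndepSet_insert_insert hreg hadj hdisj hcz.symm hxc hzc hA
  by_cases hZ : ∀ a ∈ H.neighborFinset z, ¬ H.Adj c a
  · exact hH.exists_isIndepSet_insert_insert hreg (fun h => hadj h.symm) hdisj.symm hcx.symm
      hzc hxc hZ
  -- `c` has neighbours on both sides, hence at most two on each side, against `5 ≤ d`
  push Not at hA hZ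
  obtain ⟨a, ha, hca⟩ := hA
  obtain ⟨a', ha', hca'⟩ := hZ
  have hZc := hH.card_neighborFinset_inter_le_two hreg hcover hdisj
    ((H.mem_neighborFinset _ _).1 ha) hca
  have hAc := hH.card_neighborFinset_inter_le_two hreg (fun w => by have := hcover w; tauto)
    hdisj.symm ((H.mem_neighborFinset _ _).1 ha') hca'
  have hNc : H.neighborFinset c ⊆
      (H.neighborFinset c ∩ H.neighborFinset z) ∪ (H.neighborFinset c ∩ H.neighborFinset x) := by
    intro w hw
    have hcw := (H.mem_neighborFinset _ _).1 hw
    rcases hcover w with h | h | rfl | rfl | rfl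
    · exact mem_union_right _ (mem_inter.2 ⟨hw, h⟩)
    · exact mem_union_left _ (mem_inter.2 ⟨hw, h⟩)
    · exact absurd hcw.symm hxc
    · exact absurd hcw.symm hzc
    · exact absurd hcw H.irrefl
  have := (card_le_card hNc).trans (card_union_le _ _)
  rw [card_neighborFinset_eq_degree, hreg.degree_eq] at this
  omega

lemma CliqueFree.isIndepSet_compl_insert_neighborFinset (hH : H.CliqueFree 3) {t : ℕ}
    (hδ : ∀ v, t ≤ H.degree v + 1) (hn : Fintype.card V ≤ 2 * t + 1) (hx : 7 ≤ H.degree x)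
    (hA : ∀ z ∉ insert x (H.neighborFinset x), ∃ y ∈ H.neighborFinset x, H.Adj z y) :
    H.IsIndepSet ↑(univ \ insert x (H.neighborFinset x)) := by
  set A := H.neighborFinset x
  -- `z ∉ A` has a neighbour `y ∈ A`, and `N y ⊆ Aᶜ` is disjoint from `N z`
  have hout : ∀ z ∉ insert x A, #(H.neighborFinset z \ A) + t ≤ Fintype.card V - #A + 1 := by
    intro z hz
    obtain ⟨y, hyA, hzy⟩ := hA z hz
    have hNy : H.neighborFinset y ⊆ univ \ A := fun w hw =>
      mem_sdiff.2 ⟨mem_univ w, fun hwA => hH.isIndepSet_neighborFinset x hyA hwA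
        (H.ne_of_adj ((H.mem_neighborFinset _ _).1 hw)) ((H.mem_neighborFinset _ _).1 hw)⟩
    have h := hH.degree_add_card_inter_le hzy.symm hNy
    have : H.neighborFinset z \ A ⊆ H.neighborFinset z ∩ (univ \ A) := fun w hw => by
      simp only [mem_sdiff, mem_inter, mem_univ, true_and] at hw ⊢
      exact hw
    have := card_le_card this
    rw [card_sdiff_of_subset (subset_univ _), card_univ] at h
    have := hδ y
    omega
  intro z₁ hz₁ z₂ hz₂ _ h₁₂
  simp only [coe_sdiff, coe_univ, Set.mem_sdiff, Set.mem_univ, mem_coe, true_and] at hz₁ hz₂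
  have hA₁₂ : #(H.neighborFinset z₁ ∩ A) + #(H.neighborFinset z₂ ∩ A) ≤ #A := by
    rw [← card_union_of_disjoint (Finset.disjoint_left.2 fun w hw₁ hw₂ =>
      hH.not_adj_of_adj_of_adj_s8 h₁₂ ((H.mem_neighborFinset _ _).1 (mem_inter.1 hw₂).1)
        ((H.mem_neighborFinset _ _).1 (mem_inter.1 hw₁).1))]
    exact card_le_card (union_subset inter_subset_right inter_subset_right)
  have h₁ := card_inter_add_card_sdiff (H.neighborFinset z₁) A
  have h₂ := card_inter_add_card_sdiff (H.neighborFinset z₂) A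
  have := hout z₁ hz₁
  have := hout z₂ hz₂
  have := hδ z₁
  have := hδ z₂
  have := card_le_univ A
  have : #A = H.degree x := card_neighborFinset_eq_degree H x
  rw [card_neighborFinset_eq_degree] at h₁ h₂
  omega

theorem CliqueFree.exists_isIndepSet_of_card_le (hH : H.CliqueFree 3) {t : ℕ} (ht : 8 ≤ t)
    (hδ : ∀ v, t ≤ H.degree v + 1) (hn : Fintype.card V ≤ 2 * t + 1) :
    ∃ s : Finset V, H.IsIndepSet ↑s ∧ Fintype.card V ≤ t + #s := by
  cases isEmpty_or_nonempty V
  · exact ⟨∅, by simp, by simp [Fintype.card_eq_zero]⟩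
  obtain ⟨x, hx⟩ := H.exists_maximal_degree_vertex
  have hxδ := hδ x
  by_cases hbig : Fintype.card V ≤ t + H.degree x
  · exact ⟨_, hH.isIndepSet_neighborFinset x, by rwa [card_neighborFinset_eq_degree]⟩
  by_cases hz : ∃ z ∉ insert x (H.neighborFinset x), ∀ y ∈ H.neighborFinset x, ¬ H.Adj z y
  · obtain ⟨z, hz, hzA⟩ := hz
    rw [mem_insert, not_or, mem_neighborFinset] at hz
    by_cases hsmall : Fintype.card V ≤ t + H.degree x + 1
    · refine ⟨insert z (H.neighborFinset x), ?_, ?_⟩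
      · exact coe_insert z _ ▸ (hH.isIndepSet_neighborFinset x).insert hzA
      · rw [card_insert_of_notMem (by simpa using hz.2), card_neighborFinset_eq_degree]
        omega
    have hreg : H.IsRegularOfDegree (t - 1) := fun v => by
      have := H.degree_le_maxDegree v
      have := hδ v
      omega
    obtain ⟨s, hs, hcard⟩ := hH.exists_isIndepSet_of_isRegularOfDegree (by omega) hreg
      (by omega) (Ne.symm hz.1) hz.2 (Finset.disjoint_left.2 fun y hy hzy =>
        hzA y hy ((H.mem_neighborFinset _ _).1 hzy))
    exact ⟨s, hs, by omega⟩
  push Not at hz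
  refine ⟨insert x (univ \ insert x (H.neighborFinset x)), ?_, ?_⟩
  · rw [coe_insert]
    refine (hH.isIndepSet_compl_insert_neighborFinset hδ hn (by omega) hz).insert
      fun z hz hxz => ?_
    simp [hxz] at hz
  · rw [card_insert_of_notMem (by simp), card_sdiff_of_subset (subset_univ _), card_univ,
      card_insert_of_notMem (by simp), card_neighborFinset_eq_degree]
    omega

theorem CliqueFree.exists_isPairMatching_or_isIndepSet (hH : H.CliqueFree 3) {δ : ℕ}
    (hδ : ∀ v, δ ≤ H.degree v) (hn : δ + 10 ≤ Fintype.card V) :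
    ∃ P, H.IsPairMatching P ∧ (δ + 2 ≤ Multiset.card P ∨
      ∃ s : Finset V, H.IsIndepSet ↑s ∧ Fintype.card V ≤ Multiset.card P + #s) := by
  obtain ⟨P, hP⟩ := H.exists_isMaxPairMatching
  refine ⟨P, hP.1, ?_⟩
  rcases le_or_gt (δ + 2) (Multiset.card P) with hcard | hcard
  · exact .inl hcard
  right
  by_cases htwo : ∃ a ∉ pairVerts P, ∃ b ∉ pairVerts P, a ≠ b
  · obtain ⟨a, ha, b, hb, hab⟩ := htwo
    exact hP.exists_isIndepSet_of_two_notMem hH hδ (by omega) ha hb hab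
  push Not at htwo
  have hU : #(univ.filter (· ∉ pairVerts P)) ≤ 1 :=
    card_le_one.2 fun a ha b hb => htwo a (mem_filter.1 ha).2 b (mem_filter.1 hb).2
  have := hP.1.card_filter_notMem_add
  exact hH.exists_isIndepSet_of_card_le (by omega) (fun v => by have := hδ v; omega) (by omega)

end FewUnmatched

lemma cliqueFree_compl_three_of_not_nonempty_embedding
    (hH : ¬ Nonempty ((⊥ : SimpleGraph (Fin 3)) ↪g H)) : Hᶜ.CliqueFree 3 := by
  by_contra h
  have e := Embedding.complEquiv (topEmbeddingOfNotCliqueFree h)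
  rw [compl_top, compl_compl] at e
  exact hH ⟨e⟩

end SimpleGraph

open SimpleGraph

theorem borodin_kostochka_3K1_free
    {V : Type*} [Fintype V]
    (G : SimpleGraph V) [DecidableRel G.Adj]
    (hΔ : 9 ≤ G.maxDegree)
    (hfree : ¬ Nonempty ((⊥ : SimpleGraph (Fin 3)) ↪g G)) :
    G.chromaticNumber ≤ (↑(max (G.maxDegree - 1) G.cliqueNum) : ℕ∞) := by
  classical
  have : Nonempty V := by
    by_contra hV
    rw [not_nonempty_iff] at hV
    have := G.maxDegree_le_of_forall_degree_le 0 isEmptyElim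
    omega
  have hΔn := G.maxDegree_lt_card_verts
  obtain ⟨P, hP, hcases⟩ :=
    (cliqueFree_compl_three_of_not_nonempty_embedding hfree).exists_isPairMatching_or_isIndepSet
      (δ := Fintype.card V - 1 - G.maxDegree)
      (fun v => by rw [degree_compl]; have := G.degree_le_maxDegree v; omega) (by omega)
  refine hP.colorable_of_compl.chromaticNumber_le.trans (Nat.cast_le.2 ?_)
  rcases hcases with hcard | ⟨s, hs, hcard⟩
  · omega
  · have := ((isIndepSet_compl G).1 hs).card_le_cliqueNum
    omega
end
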